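/- arXiv:2207.00918 — 6 statements merged into one kernel-verified Lean document; each statement's English description precedes it below -/
import Mathlib

section
/- Let K be a field, let n ≥ 2 and d ≥ 2 be integers, and let r ≥ n+1. Then there does not exist a K-smooth linear system of projective dimension r of degree-d hypersurfaces in ℙ^n; that is, for any linearly independent homogeneous polynomials F_0, …, F_r of degree d in K[x_0, …, x_n], there exist a_0, …, a_r ∈ K, not all zero, such that the polynomial a_0F_0 + … + a_rF_r does not cut out a smooth hypersurface in ℙ^n. -/
open MvPolynomial

section Aux

variable {K : Type*} [CommSemiring K] {n : ℕ}

/-- Evaluation of a monomial at the point `(1,0,…,0)` vanishes if the monomial involves a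
variable other than `x_0`. -/
lemma eval_single_monomial_eq_zero (s : Fin (n + 1) →₀ ℕ) (a : K) {j : Fin (n + 1)}
    (hj : j ≠ 0) (hsj : s j ≠ 0) :
    eval (Pi.single (0 : Fin (n + 1)) (1 : K)) (monomial s a) = 0 := by
  rw [eval_monomial]
  have : (s.prod fun i e => (Pi.single (0 : Fin (n + 1)) (1 : K) : Fin (n + 1) → K) i ^ e) = 0 := by
    apply Finset.prod_eq_zero (Finsupp.mem_support_iff.mpr hsj)
    show (Pi.single (0 : Fin (n + 1)) (1 : K) : Fin (n + 1) → K) j ^ s j = 0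
    rw [Pi.single_eq_of_ne hj, zero_pow hsj]
  rw [this, mul_zero]

lemma eval_single_monomial_single (k : ℕ) (a : K) :
    eval (Pi.single (0 : Fin (n + 1)) (1 : K)) (monomial (Finsupp.single 0 k) a) = a := by
  rw [eval_monomial, Finsupp.prod_single_index (by simp)]
  simp

/-- Euler's identity evaluated at the point `(1,0,…,0)`: for a homogeneous polynomial of
degree `d`, the value of `∂p/∂x_0` there equals `d` times the value of `p`. -/
lemma euler_at_single {d : ℕ} (p : MvPolynomial (Fin (n + 1)) K) (hp : p.IsHomogeneous d) :
    eval (Pi.single (0 : Fin (n + 1)) (1 : K)) (pderiv 0 p)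
      = (d : K) * eval (Pi.single (0 : Fin (n + 1)) (1 : K)) p := by
  conv_lhs => rw [← p.support_sum_monomial_coeff]
  conv_rhs => rw [← p.support_sum_monomial_coeff]
  rw [map_sum, map_sum, map_sum, Finset.mul_sum]
  apply Finset.sum_congr rfl
  intro m hm
  have hdeg : m.degree = d := by
    have := hp (MvPolynomial.mem_support_iff.mp hm)
    rw [Finsupp.degree_eq_weight_one]; exact this
  by_cases hsupp : ∀ j ∈ m.support, j = (0 : Fin (n + 1))
  · -- m is supported at 0, i.e. m = single 0 (m 0)
    have hm0 : m = Finsupp.single 0 (m 0) := by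
      ext j
      by_cases hj : j = 0
      · subst hj; simp
      · rw [Finsupp.single_eq_of_ne' (Ne.symm hj)]
        by_contra h
        exact hj (hsupp j (Finsupp.mem_support_iff.mpr h))
    have hd0 : m 0 = d := by
      rcases eq_or_ne (m 0) 0 with h | h
      · rw [← hdeg, hm0, h]
        simp [Finsupp.degree]
      · rw [← hdeg, hm0, Finsupp.degree_single]
        simp
    rw [hm0, pderiv_monomial_single, eval_single_monomial_single, eval_single_monomial_single,
      hd0, mul_comm]

  · push_neg at hsupp
    obtain ⟨j, hjm, hj0⟩ := hsupp
    have hsj : m j ≠ 0 := Finsupp.mem_support_iff.mp hjm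
    rw [eval_single_monomial_eq_zero m _ hj0 hsj, mul_zero, pderiv_monomial]
    rw [eval_single_monomial_eq_zero _ _ hj0]
    rw [Finsupp.coe_tsub, Pi.sub_apply]
    have : Finsupp.single (0 : Fin (n + 1)) 1 j = 0 := Finsupp.single_eq_of_ne' (Ne.symm hj0)
    omega

end Aux

/-- A homogeneous polynomial `F` of degree `d` in `K[x_0, …, x_n]` cuts out a smooth
hypersurface in `ℙ^n` if there is no point `t ≠ 0` with coordinates in an algebraic closure
of `K` at which `F` and all its partial derivatives vanish simultaneously. -/
def CutsOutSmoothHypersurface {K : Type*} [Field K] {n : ℕ}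
    (F : MvPolynomial (Fin (n + 1)) K) : Prop :=
  ∀ t : Fin (n + 1) → AlgebraicClosure K, t ≠ 0 →
    ¬ (eval t (map (algebraMap K (AlgebraicClosure K)) F) = 0 ∧
       ∀ i : Fin (n + 1),
         eval t (map (algebraMap K (AlgebraicClosure K)) (pderiv i F)) = 0)

/-- If `r ≥ n + 1`, there is no `K`-smooth linear system of projective
dimension `r` of degree-`d` hypersurfaces in `ℙ^n`. -/
theorem no_K_smooth_linear_system_of_large_dimension
    {K : Type*} [Field K] (n d r : ℕ) (hn : 2 ≤ n) (hd : 2 ≤ d) (hr : n + 1 ≤ r)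
    (F : Fin (r + 1) → MvPolynomial (Fin (n + 1)) K)
    (hhom : ∀ i, (F i).IsHomogeneous d)
    (hli : LinearIndependent K F) :
    ∃ a : Fin (r + 1) → K, a ≠ 0 ∧
      ¬ CutsOutSmoothHypersurface (∑ i, a i • F i) := by
  classical
  set e0 : Fin (n + 1) → K := Pi.single 0 1 with he0
  -- the linear map recording the value and the partials `∂/∂x_j`, `j ≠ 0`, at `e0`
  let L : (Fin (r + 1) → K) →ₗ[K] (Fin (n + 1) → K) :=
    { toFun := fun a j =>
        if j = 0 then eval e0 (∑ i, a i • F i) else eval e0 (pderiv j (∑ i, a i • F i))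
      map_add' := by
        intro a b
        funext j
        simp only [Pi.add_apply, add_smul, Finset.sum_add_distrib, map_add]
        split <;> simp
      map_smul' := by
        intro c a
        funext j
        simp only [Pi.smul_apply, smul_eq_mul, RingHom.id_apply]
        rw [show (∑ i, (c * a i) • F i) = c • ∑ i, a i • F i by
          rw [Finset.smul_sum]; exact Finset.sum_congr rfl fun i _ => (smul_smul c (a i) (F i)).symm]
        split <;> simp [smul_eval] }
  have hninj : ¬ Function.Injective L := by
    intro h
    have := LinearMap.finrank_le_finrank_of_injective h
    rw [Module.finrank_fin_fun, Module.finrank_fin_fun] at this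
    omega
  rw [Function.not_injective_iff] at hninj
  obtain ⟨x, y, hxy, hne⟩ := hninj
  refine ⟨x - y, sub_ne_zero.mpr hne, ?_⟩
  have hL : L (x - y) = 0 := by rw [map_sub, hxy, sub_self]
  set a : Fin (r + 1) → K := x - y with ha
  set G : MvPolynomial (Fin (n + 1)) K := ∑ i, a i • F i with hG
  have hGhom : G.IsHomogeneous d := by
    rw [hG]
    rw [← mem_homogeneousSubmodule]
    exact Submodule.sum_mem _ fun i _ =>
      Submodule.smul_mem _ _ ((mem_homogeneousSubmodule _ _).mpr (hhom i))
  have hval : eval e0 G = 0 := by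
    have h0 := congrFun hL 0
    simp only [L, LinearMap.coe_mk, AddHom.coe_mk, Pi.zero_apply, if_pos rfl] at h0
    rw [hG]
    exact h0
  have hpd : ∀ j : Fin (n + 1), eval e0 (pderiv j G) = 0 := by
    intro j
    by_cases hj : j = 0
    · subst hj
      rw [euler_at_single G hGhom, hval, mul_zero]
    · have hj' := congrFun hL j
      simp only [L, LinearMap.coe_mk, AddHom.coe_mk, Pi.zero_apply, if_neg hj] at hj'
      rw [hG]
      exact hj'
  -- now pass to the algebraic closure
  intro hcut
  set φ : K →+* AlgebraicClosure K := algebraMap K (AlgebraicClosure K) with hφ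
  set t : Fin (n + 1) → AlgebraicClosure K := fun j => φ (e0 j) with ht
  have ht0 : t ≠ 0 := by
    intro h
    have := congrFun h 0
    simp [ht, he0] at this
  have key : ∀ p : MvPolynomial (Fin (n + 1)) K,
      eval t (map φ p) = φ (eval e0 p) := by
    intro p
    rw [← eval₂_eq_eval_map]
    have := eval₂_comp_left φ (RingHom.id K) e0 p
    rw [ht]; simpa [Function.comp_def] using this.symm
  refine hcut t ht0 ⟨?_, ?_⟩
  · rw [key, hval, map_zero]
  · intro i
    rw [key, hpd i, map_zero]
end

section
/- Let K be a finite field of characteristic p, and let n ≥ 2 and d ≥ 2 be integers with p not dividing gcd(d, n+1). Then there exist linearly independent homogeneous polynomials F_0, …, F_n of degree d in K[x_0, …, x_n] such that for every (a_0, …, a_n) ∈ K^{n+1} \ {0}, the polynomial a_0F_0 + … + a_nF_n cuts out a smooth hypersurface in ℙ^n. -/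
open MvPolynomial

namespace SmoothLinSys
section Counting
open Polynomial


lemma geom_sum_lt {q : ℕ} (hq : 2 ≤ q) : ∀ m : ℕ, ∑ e ∈ Finset.range m, q ^ e < q ^ m := by
  intro m
  induction m with
  | zero => simp
  | succ m ih =>
    rw [Finset.sum_range_succ, pow_succ]
    have h1 : q ^ m * 2 ≤ q ^ m * q := Nat.mul_le_mul_left _ hq
    omega

lemma zmod_cover {m : ℕ} [NeZero m] (P : ZMod m → Prop) (j0 : ZMod m) (h0 : P j0)
    (hstep : ∀ j, P j → P (j + 1)) : ∀ j, P j := by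
  have key : ∀ k : ℕ, P (j0 + (k : ZMod m)) := by
    intro k
    induction k with
    | zero => simpa using h0
    | succ k ih =>
      have := hstep _ ih
      rw [Nat.cast_succ, ← add_assoc]
      exact this
  intro j
  have := key (j - j0).val
  rwa [ZMod.natCast_val, ZMod.cast_id, add_sub_cancel] at this

lemma zmod_cover_sub {m : ℕ} [NeZero m] (P : ZMod m → Prop) (j0 : ZMod m) (h0 : P j0)
    (hstep : ∀ j, P j → P (j - 1)) : ∀ j, P j := by
  have key : ∀ k : ℕ, P (j0 - (k : ZMod m)) := by
    intro k
    induction k with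
    | zero => simpa using h0
    | succ k ih =>
      have := hstep _ ih
      rw [Nat.cast_succ, sub_add_eq_sub_sub]
      exact this
  intro j
  have := key (j0 - j).val
  rwa [ZMod.natCast_val, ZMod.cast_id, sub_sub_cancel] at this

lemma zmod_cover_sub2 {m : ℕ} [NeZero m] (hm : IsUnit (2 : ZMod m)) (P : ZMod m → Prop)
    (j0 : ZMod m) (h0 : P j0) (hstep : ∀ j, P j → P (j - 2)) : ∀ j, P j := by
  have key : ∀ k : ℕ, P (j0 - 2 * (k : ZMod m)) := by
    intro k
    induction k with
    | zero => simpa using h0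
    | succ k ih =>
      have := hstep _ ih
      rw [Nat.cast_succ, mul_add, mul_one, sub_add_eq_sub_sub]
      exact this
  intro j
  obtain ⟨u, hu⟩ := hm
  have := key (((u⁻¹ : (ZMod m)ˣ) : ZMod m) * (j0 - j)).val
  rw [ZMod.natCast_val, ZMod.cast_id, ← mul_assoc, ← hu] at this
  rw [show ((u : ZMod m) * ((u⁻¹ : (ZMod m)ˣ) : ZMod m)) = 1 by
    rw [← Units.val_mul, mul_inv_cancel, Units.val_one], one_mul, sub_sub_cancel] at this
  exact this




variable {K : Type*} [Field K] [Fintype K]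

local notation "Kb" => AlgebraicClosure K

lemma fixed_mem_range (x : Kb) (hx : x ^ Fintype.card K = x) :
    ∃ y : K, algebraMap K Kb y = x := by
  classical
  set q := Fintype.card K with hq
  have hq1 : 1 < q := Fintype.one_lt_card
  set ι := algebraMap K Kb with hι
  set R : Finset Kb := (Polynomial.X ^ q - Polynomial.X : Kb[X]).roots.toFinset with hR
  have hne : (Polynomial.X ^ q - Polynomial.X : Kb[X]) ≠ 0 := FiniteField.X_pow_card_sub_X_ne_zero Kb hq1
  have himg : (Finset.univ.image ι) ⊆ R := by
    intro z hz
    obtain ⟨y, -, rfl⟩ := Finset.mem_image.mp hz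
    rw [hR, Multiset.mem_toFinset, Polynomial.mem_roots hne]
    simp only [Polynomial.IsRoot, Polynomial.eval_sub, Polynomial.eval_pow, Polynomial.eval_X]
    rw [← map_pow, FiniteField.pow_card, sub_self]
  have hcard1 : (Finset.univ.image ι).card = q := by
    rw [Finset.card_image_of_injective _ (algebraMap K Kb).injective, Finset.card_univ]
  have hcard2 : R.card ≤ q := by
    calc R.card ≤ Multiset.card (Polynomial.X ^ q - Polynomial.X : Kb[X]).roots := Multiset.toFinset_card_le _
    _ ≤ (Polynomial.X ^ q - Polynomial.X : Kb[X]).natDegree := Polynomial.card_roots' _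
    _ = q := FiniteField.X_pow_card_sub_X_natDegree_eq Kb hq1
  have heq : (Finset.univ.image ι) = R :=
    Finset.eq_of_subset_of_card_le himg (by omega)
  have hxR : x ∈ R := by
    rw [hR, Multiset.mem_toFinset, Polynomial.mem_roots hne]
    simp only [Polynomial.IsRoot, Polynomial.eval_sub, Polynomial.eval_pow, Polynomial.eval_X]
    rw [hx, sub_self]
  rw [← heq] at hxR
  obtain ⟨y, -, hy⟩ := Finset.mem_image.mp hxR
  exact ⟨y, hy⟩

lemma exists_alpha (p : ℕ) [CharP K p] (m : ℕ) (hm : 1 ≤ m) :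
    ∃ α : Kb, α ^ Fintype.card K ^ m = α ∧
      ∀ e, 0 < e → e < m → α ^ Fintype.card K ^ e ≠ α := by
  classical
  set q := Fintype.card K with hq
  have hq1 : 1 < q := Fintype.one_lt_card
  obtain ⟨f, hpp, hqf⟩ := FiniteField.card K p
  haveI : CharP Kb p := charP_of_injective_algebraMap (algebraMap K Kb).injective p
  have hpdvd : p ∣ q ^ m := by
    rw [hq, hqf]
    exact dvd_pow (dvd_pow_self p f.pos.ne') (by positivity)
  have hsep : (Polynomial.X ^ q ^ m - Polynomial.X : Kb[X]).Separable := galois_poly_separable p (q ^ m) hpdvd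
  have hQ1 : 1 < q ^ m := Nat.one_lt_pow (by omega) hq1
  have hnd : (Polynomial.X ^ q ^ m - Polynomial.X : Kb[X]).natDegree = q ^ m :=
    FiniteField.X_pow_card_sub_X_natDegree_eq Kb hQ1
  have hcardS : ((Polynomial.X ^ q ^ m - Polynomial.X : Kb[X]).roots.toFinset).card = q ^ m := by
    have h2 := Polynomial.splits_iff_card_roots.mp
      (IsAlgClosed.splits (Polynomial.X ^ q ^ m - Polynomial.X : Kb[X]))
    rw [hnd] at h2
    rw [Multiset.toFinset_card_of_nodup (Polynomial.nodup_roots hsep), h2]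
  set T : Finset Kb :=
    (Finset.Ico 1 m).biUnion (fun e => (Polynomial.X ^ q ^ e - Polynomial.X : Kb[X]).roots.toFinset) with hT
  have hcardT : T.card < q ^ m := by
    calc T.card ≤ ∑ e ∈ Finset.Ico 1 m, ((Polynomial.X ^ q ^ e - Polynomial.X : Kb[X]).roots.toFinset).card :=
        Finset.card_biUnion_le
    _ ≤ ∑ e ∈ Finset.Ico 1 m, q ^ e := by
        refine Finset.sum_le_sum fun e he => ?_
        obtain ⟨he1, he2⟩ := Finset.mem_Ico.mp he
        have h1e : 1 < q ^ e := Nat.one_lt_pow (by omega) hq1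
        calc ((Polynomial.X ^ q ^ e - Polynomial.X : Kb[X]).roots.toFinset).card
            ≤ Multiset.card (Polynomial.X ^ q ^ e - Polynomial.X : Kb[X]).roots := Multiset.toFinset_card_le _
          _ ≤ (Polynomial.X ^ q ^ e - Polynomial.X : Kb[X]).natDegree := Polynomial.card_roots' _
          _ = q ^ e := FiniteField.X_pow_card_sub_X_natDegree_eq Kb h1e
    _ ≤ ∑ e ∈ Finset.range m, q ^ e := Finset.sum_le_sum_of_subset (by
        intro e he; obtain ⟨-, h2⟩ := Finset.mem_Ico.mp he; exact Finset.mem_range.mpr h2)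
    _ < q ^ m := geom_sum_lt hq1 m
  have hnsub : ¬ ((Polynomial.X ^ q ^ m - Polynomial.X : Kb[X]).roots.toFinset ⊆ T) := by
    intro h
    have := Finset.card_le_card h
    omega
  obtain ⟨α, hαS, hαT⟩ := Finset.not_subset.mp hnsub
  refine ⟨α, ?_, ?_⟩
  · rw [Multiset.mem_toFinset, Polynomial.mem_roots'] at hαS
    have := hαS.2
    simp only [Polynomial.IsRoot, Polynomial.eval_sub, Polynomial.eval_pow, Polynomial.eval_X] at this
    exact sub_eq_zero.mp this
  · intro e he1 he2 hcon
    apply hαT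
    rw [hT, Finset.mem_biUnion]
    refine ⟨e, Finset.mem_Ico.mpr ⟨he1, he2⟩, ?_⟩
    rw [Multiset.mem_toFinset,
      Polynomial.mem_roots (FiniteField.X_pow_card_sub_X_ne_zero Kb (Nat.one_lt_pow he1.ne' hq1))]
    simp only [Polynomial.IsRoot, Polynomial.eval_sub, Polynomial.eval_pow, Polynomial.eval_X]
    rw [hcon, sub_self]



end Counting

variable {F : Type*} [Field F] (q : ℕ) {m : ℕ} [NeZero m]

/-- powers α^{q^j} indexed cyclically -/
noncomputable def beta (α : F) : ZMod m → F := fun j => α ^ q ^ j.val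

lemma beta_succ (hm : 1 < m) (α : F) (hα : α ^ q ^ m = α) (j : ZMod m) :
    beta q α j ^ q = beta q α (j + 1) := by
  unfold beta
  rw [← pow_mul, ← pow_succ]
  haveI : Fact (1 < m) := ⟨hm⟩
  have hval : (j + 1).val = (j.val + 1) % m := by
    rw [ZMod.val_add, ZMod.val_one]
  rcases lt_or_eq_of_le (Nat.succ_le_of_lt (ZMod.val_lt j)) with h | h
  · rw [hval, Nat.mod_eq_of_lt h]
  · have h' : j.val + 1 = m := h
    rw [hval, h', Nat.mod_self, pow_zero, pow_one]
    exact hα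

lemma beta_injective (α : F) (hα : α ^ q ^ m = α)
    (hdist : ∀ e, 0 < e → e < m → α ^ q ^ e ≠ α)
    (hinj : ∀ s : ℕ, Function.Injective fun x : F => x ^ q ^ s) :
    Function.Injective (beta q α (m := m)) := by
  have key : ∀ j k : ZMod m, j.val ≤ k.val → beta q α j = beta q α k → j = k := by
    intro j k hle h
    rcases eq_or_lt_of_le hle with heq | hlt
    · exact ZMod.val_injective m heq
    · exfalso
      have hs : α ^ q ^ (k.val - j.val) = α := by
        apply hinj j.val
        show (α ^ q ^ (k.val - j.val)) ^ q ^ j.val = α ^ q ^ j.val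
        rw [← pow_mul, ← pow_add, Nat.sub_add_cancel hle]
        · exact h.symm
      exact hdist (k.val - j.val) (by omega) (by have := ZMod.val_lt k; omega) hs
  intro j k h
  rcases le_total j.val k.val with hle | hle
  · exact key j k hle h
  · exact (key k j hle h.symm).symm

variable (β : ZMod m → F)

noncomputable def ell (j : ZMod m) : MvPolynomial (Fin m) F :=
  ∑ i : Fin m, C (β j ^ (i : ℕ)) * X i

lemma ell_eval (t : Fin m → F) (j : ZMod m) :
    eval t (ell β j) = ∑ i : Fin m, β j ^ (i : ℕ) * t i := by
  unfold ell
  rw [map_sum]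
  simp

lemma ell_pderiv (i : Fin m) (j : ZMod m) : pderiv i (ell β j) = C (β j ^ (i : ℕ)) := by
  unfold ell
  rw [map_sum]
  rw [Finset.sum_eq_single i]
  · rw [pderiv_C_mul, pderiv_X_self, mul_one]
  · intro k _ hk
    rw [pderiv_C_mul, pderiv_X, Pi.single_eq_of_ne hk, mul_zero]
  · intro h
    exact absurd (Finset.mem_univ i) h

lemma ell_homog (j : ZMod m) : (ell β j).IsHomogeneous 1 :=
  IsHomogeneous.sum _ _ _ fun i _ => isHomogeneous_C_mul_X _ _

lemma ell_map (φ : F →+* F) (hφβ : ∀ j, φ (β j) = β (j + 1)) (j : ZMod m) :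
    map φ (ell β j) = ell β (j + 1) := by
  unfold ell
  rw [map_sum]
  simp [map_pow, hφβ]

noncomputable def hh (e₀ : ℕ) (c : ZMod m) (j : ZMod m) : MvPolynomial (Fin m) F :=
  ell β j ^ (e₀ + 1) * ell β (j + c)

lemma hh_homog (e₀ : ℕ) (c j : ZMod m) : (hh β e₀ c j).IsHomogeneous (e₀ + 2) := by
  have h := ((ell_homog β j).pow (e₀ + 1)).mul (ell_homog β (j + c))
  rw [one_mul] at h
  exact h

lemma hh_map (φ : F →+* F) (hφβ : ∀ j, φ (β j) = β (j + 1)) (e₀ : ℕ) (c j : ZMod m) :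
    map φ (hh β e₀ c j) = hh β e₀ c (j + 1) := by
  unfold hh
  rw [map_mul, map_pow, ell_map β φ hφβ, ell_map β φ hφβ]
  rw [show j + c + 1 = j + 1 + c by ring]

lemma hh_pderiv_eval (e₀ : ℕ) (c : ZMod m) (t : Fin m → F) (i : Fin m) (j : ZMod m) :
    eval t (pderiv i (hh β e₀ c j)) =
      (e₀ + 1 : F) * (eval t (ell β j)) ^ e₀ * β j ^ (i : ℕ) * eval t (ell β (j + c))
        + (eval t (ell β j)) ^ (e₀ + 1) * β (j + c) ^ (i : ℕ) := by
  unfold hh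
  rw [pderiv_mul, pderiv_pow, ell_pderiv, ell_pderiv]
  simp only [map_add, map_mul, map_pow, eval_C, map_natCast]
  push_cast
  ring

noncomputable def ff (e₀ : ℕ) (c : ZMod m) (i : Fin m) : MvPolynomial (Fin m) F :=
  ∑ j : ZMod m, C (β j ^ (i : ℕ)) * hh β e₀ c j

lemma ff_homog (e₀ : ℕ) (c : ZMod m) (i : Fin m) : (ff β e₀ c i).IsHomogeneous (e₀ + 2) :=
  IsHomogeneous.sum _ _ _ fun j _ => (hh_homog β e₀ c j).C_mul _

lemma ff_map (φ : F →+* F) (hφβ : ∀ j, φ (β j) = β (j + 1)) (e₀ : ℕ) (c : ZMod m) (i : Fin m) :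
    map φ (ff β e₀ c i) = ff β e₀ c i := by
  unfold ff
  rw [map_sum]
  simp only [map_mul, map_C, map_pow, hφβ, hh_map β φ hφβ]
  exact Fintype.sum_equiv (Equiv.addRight 1) _ _ (fun j => by simp)

lemma descend {A B : Type*} [CommSemiring A] [CommSemiring B] {σ : Type*}
    (g : A →+* B) (P : MvPolynomial σ B) (h : ∀ μ, ∃ y, g y = coeff μ P) :
    ∃ Q : MvPolynomial σ A, map g Q = P := by
  classical
  choose r hr using h
  refine ⟨∑ μ ∈ P.support, monomial μ (r μ), ?_⟩
  rw [map_sum]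
  simp only [map_monomial, hr]
  exact support_sum_monomial_coeff P


end SmoothLinSys
open SmoothLinSys in
/-- Over a finite field `K` of characteristic `p` with `p ∤ gcd(d, n+1)`,
there exist `n + 1` linearly independent degree-`d` forms spanning a `K`-smooth linear
system of projective dimension `n` in `ℙ^n`. -/
theorem exists_K_smooth_linear_system_of_finite_field
    {K : Type*} [Field K] [Fintype K] (p : ℕ) [CharP K p]
    (n d : ℕ) (hn : 2 ≤ n) (hd : 2 ≤ d)
    (hp : ¬ p ∣ Nat.gcd d (n + 1)) :
    ∃ F : Fin (n + 1) → MvPolynomial (Fin (n + 1)) K,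
      LinearIndependent K F ∧ (∀ i, (F i).IsHomogeneous d) ∧
      ∀ a : Fin (n + 1) → K, a ≠ 0 →
        CutsOutSmoothHypersurface (∑ i, a i • F i) := by
  classical
  obtain ⟨e₀, rfl⟩ : ∃ e₀, d = e₀ + 2 := ⟨d - 2, by omega⟩
  set ι := algebraMap K (AlgebraicClosure K) with hι
  set q := Fintype.card K with hq
  have hq1 : 1 < q := Fintype.one_lt_card
  obtain ⟨f, hpp, hqf⟩ := FiniteField.card K p
  haveI : Fact p.Prime := ⟨hpp⟩
  haveI : CharP (AlgebraicClosure K) p := charP_of_injective_algebraMap (algebraMap K (AlgebraicClosure K)).injective p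
  haveI : Fact (1 < n + 1) := ⟨by omega⟩
  set φ := iterateFrobenius (AlgebraicClosure K) p f with hφdef
  have hφ : ∀ x : (AlgebraicClosure K), φ x = x ^ q := fun x => by
    rw [hφdef, iterateFrobenius_def, hq, hqf]
  have hφι : ∀ z : K, φ (ι z) = ι z := fun z => by
    rw [hφ, ← map_pow, hq, FiniteField.pow_card]
  have hpow_inj : ∀ s : ℕ, Function.Injective fun x : (AlgebraicClosure K) => x ^ q ^ s := by
    intro s x y hxy
    apply (iterateFrobenius (AlgebraicClosure K) p (f * s)).injective
    have hrw : ∀ z : (AlgebraicClosure K), iterateFrobenius (AlgebraicClosure K) p (f * s) z = z ^ q ^ s := fun z => by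
      rw [iterateFrobenius_def, hq, hqf, ← pow_mul]
    rw [hrw, hrw]
    exact hxy
  obtain ⟨α, hα1, hα2⟩ := SmoothLinSys.exists_alpha (K := K) p (n + 1) (by omega)
  rw [← hq] at hα1 hα2
  set β : ZMod (n + 1) → (AlgebraicClosure K) := SmoothLinSys.beta q α with hβdef
  have hβsucc : ∀ j, β j ^ q = β (j + 1) := beta_succ q (by omega) α hα1
  have hβinj : Function.Injective β := beta_injective q α hα1 hα2 hpow_inj
  have hφβ : ∀ j, φ (β j) = β (j + 1) := fun j => by rw [hφ, hβsucc]
  set c : ZMod (n + 1) := if p ∣ (e₀ + 2) then 1 else 0 with hcdef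
  -- Vandermonde machinery
  set E : Fin (n + 1) ≃ ZMod (n + 1) :=
    Fintype.equivOfCardEq (by simp) with hEdef
  have hβEinj : Function.Injective (β ∘ E) := hβinj.comp E.injective
  have N1 : ∀ v : Fin (n + 1) → (AlgebraicClosure K),
      (∀ j : ZMod (n + 1), ∑ i : Fin (n + 1), β j ^ (i : ℕ) * v i = 0) → v = 0 := by
    intro v hv
    exact Matrix.eq_zero_of_forall_index_sum_pow_mul_eq_zero hβEinj (fun j => hv (E j))
  have N3 : ∀ w : ZMod (n + 1) → (AlgebraicClosure K),
      (∀ i : Fin (n + 1), ∑ j : ZMod (n + 1), w j * β j ^ (i : ℕ) = 0) → w = 0 := by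
    intro w hw
    have h2 := Matrix.eq_zero_of_forall_pow_sum_mul_pow_eq_zero (f := β ∘ E) (v := w ∘ E)
      hβEinj (fun i => by
        simp only [Function.comp_apply]
        rw [Equiv.sum_comp E (fun j => w j * β j ^ (i : ℕ))]
        exact hw i)
    funext j
    have h3 := congrFun h2 (E.symm j)
    simpa using h3
  have N2 : ∀ u : ZMod (n + 1) → (AlgebraicClosure K), ∃ t : Fin (n + 1) → (AlgebraicClosure K),
      ∀ j : ZMod (n + 1), ∑ i : Fin (n + 1), β j ^ (i : ℕ) * t i = u j := by
    intro u
    have hdet : IsUnit (Matrix.vandermonde (β ∘ E)).det := by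
      rw [isUnit_iff_ne_zero]
      exact Matrix.det_vandermonde_ne_zero_iff.mpr hβEinj
    have hsurj := Matrix.mulVec_surjective_iff_isUnit.mpr
      ((Matrix.isUnit_iff_isUnit_det _).mpr hdet)
    obtain ⟨t, ht⟩ := hsurj (u ∘ E)
    refine ⟨t, fun j => ?_⟩
    have h2 := congrFun ht (E.symm j)
    simp only [Matrix.mulVec, dotProduct, Matrix.vandermonde_apply,
      Function.comp_apply, Equiv.apply_symm_apply] at h2
    exact h2
  -- descend the forms to K
  have hdesc : ∀ i : Fin (n + 1), ∃ Q : MvPolynomial (Fin (n + 1)) K,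
      MvPolynomial.map ι Q = ff β e₀ c i := by
    intro i
    apply descend
    intro μ
    apply fixed_mem_range
    have h2 : MvPolynomial.coeff μ (MvPolynomial.map φ (ff β e₀ c i))
        = MvPolynomial.coeff μ (ff β e₀ c i) := by rw [ff_map β φ hφβ]
    rw [MvPolynomial.coeff_map] at h2
    rw [← hq, ← hφ]
    exact h2
  choose FF hFF using hdesc
  -- b-values
  set b : (Fin (n + 1) → K) → ZMod (n + 1) → (AlgebraicClosure K) :=
    fun a j => ∑ i : Fin (n + 1), ι (a i) * β j ^ (i : ℕ) with hbdef
  have hφb : ∀ a j, φ (b a j) = b a (j + 1) := by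
    intro a j
    rw [hbdef]
    simp only
    rw [map_sum]
    refine Finset.sum_congr rfl fun i _ => ?_
    rw [map_mul, map_pow, hφβ, hφι]
  have hbne : ∀ a : Fin (n + 1) → K, a ≠ 0 → ∀ j, b a j ≠ 0 := by
    intro a ha j hj
    have hall : ∀ k, b a k = 0 :=
      zmod_cover (fun k => b a k = 0) j hj
        (fun k hk => by show b a (k + 1) = 0; rw [← hφb a k, hk, map_zero])
    apply ha
    have hv := N1 (fun i => ι (a i)) (fun k => by
      have := hall k
      rw [hbdef] at this
      simpa [mul_comm] using this)
    funext i
    have h3 := congrFun hv i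
    exact ι.injective (by simpa using h3)
  -- key sum identity
  have hsum : ∀ a : Fin (n + 1) → K,
      MvPolynomial.map ι (∑ i, a i • FF i) = ∑ j : ZMod (n + 1), MvPolynomial.C (b a j) * hh β e₀ c j := by
    intro a
    rw [map_sum]
    have h1 : ∀ i, MvPolynomial.map ι (a i • FF i)
        = MvPolynomial.C (ι (a i)) * ff β e₀ c i := fun i => by
      rw [MvPolynomial.smul_eq_C_mul, map_mul, MvPolynomial.map_C, hFF]
    simp only [h1, ff, Finset.mul_sum]
    rw [Finset.sum_comm]
    refine Finset.sum_congr rfl fun j _ => ?_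
    rw [hbdef]
    simp only [map_sum, Finset.sum_mul]
    refine Finset.sum_congr rfl fun i _ => ?_
    rw [map_mul, mul_assoc]
  -- extraction of coefficients from vanishing combinations of the hh's
  have hbzero : ∀ bb : ZMod (n + 1) → (AlgebraicClosure K),
      (∑ j : ZMod (n + 1), MvPolynomial.C (bb j) * hh β e₀ c j) = 0 → ∀ j0, bb j0 = 0 := by
    intro bb h0 j0
    set u : ZMod (n + 1) → (AlgebraicClosure K) := fun j => if j = j0 ∨ j = j0 + c then 1 else 0 with hu
    obtain ⟨t, ht⟩ := N2 u
    have hy : ∀ j, MvPolynomial.eval t (ell β j) = u j := fun j => by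
      rw [ell_eval]; exact ht j
    have he := congrArg (MvPolynomial.eval t) h0
    rw [map_sum, map_zero] at he
    simp only [hh, map_mul, MvPolynomial.eval_C, map_pow, hy] at he
    rw [Finset.sum_eq_single j0] at he
    · have hu1 : u j0 = 1 := by rw [hu]; simp
      have hu2 : u (j0 + c) = 1 := by rw [hu]; simp
      rw [hu1, hu2, one_pow, one_mul, mul_one] at he
      exact he
    · intro j _ hj
      rcases eq_or_ne (u j) 0 with h2 | h2
      · rw [h2, zero_pow (by omega), zero_mul, mul_zero]
      · have hj2 : j = j0 + c := by
          rw [hu] at h2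
          simp only at h2
          rcases Classical.em (j = j0 ∨ j = j0 + c) with h3 | h3
          · exact h3.resolve_left hj
          · rw [if_neg h3] at h2; exact absurd rfl h2
        have hc1 : c = 1 := by
          by_contra h3
          have hc0 : c = 0 := by
            rw [hcdef]
            rcases Classical.em (p ∣ (e₀ + 2)) with h4 | h4
            · exact absurd (by rw [hcdef, if_pos h4]) h3
            · rw [if_neg h4]
          rw [hc0, add_zero] at hj2
          exact hj hj2
        have h4 : u (j + c) = 0 := by
          have hne : ¬ (j + c = j0 ∨ j + c = j0 + c) := by
            push_neg
            constructor
            · rw [hj2, hc1]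
              intro h5
              have h6 : (2 : ZMod (n + 1)) = 0 := by linear_combination h5
              rw [show (2 : ZMod (n + 1)) = ((2 : ℕ) : ZMod (n + 1)) by push_cast; ring,
                ZMod.natCast_eq_zero_iff] at h6
              have h7 := Nat.le_of_dvd (by norm_num) h6
              omega
            · rw [hj2, hc1]
              intro h5
              exact one_ne_zero (show (1 : ZMod (n + 1)) = 0 by linear_combination h5)
          rw [hu]
          simp only [if_neg hne]
        rw [h4, mul_zero, mul_zero]
    · intro h2
      exact absurd (Finset.mem_univ j0) h2
  -- the three conclusions
  refine ⟨FF, ?_, ?_, ?_⟩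
  · -- linear independence
    rw [Fintype.linearIndependent_iff]
    intro a ha
    have h0 : ∑ j : ZMod (n + 1), MvPolynomial.C (b a j) * hh β e₀ c j = 0 := by
      rw [← hsum a, ha, map_zero]
    have hb0 : ∀ j, b a j = 0 := hbzero _ h0
    have hv := N1 (fun i => ι (a i)) (fun j => by
      have := hb0 j
      rw [hbdef] at this
      simpa [mul_comm] using this)
    intro i
    have h3 := congrFun hv i
    exact ι.injective (by simpa using h3)
  · -- homogeneity
    intro i μ hμ
    refine ff_homog β e₀ c i ?_
    rw [← hFF i, MvPolynomial.coeff_map]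
    intro h2
    exact hμ (ι.injective (h2.trans (map_zero ι).symm))
  · -- smoothness
    intro a ha t ht hcon
    obtain ⟨h0, hD⟩ := hcon
    rw [← hι] at h0 hD
    set y : ZMod (n + 1) → (AlgebraicClosure K) := fun j => MvPolynomial.eval t (ell β j) with hydef
    have hyeq : ∀ j, y j = ∑ i : Fin (n + 1), β j ^ (i : ℕ) * t i := fun j => by
      rw [hydef]; exact ell_eval β t j
    -- main sum evaluated
    have h0' : ∑ j : ZMod (n + 1), b a j * (y j ^ (e₀ + 1) * y (j + c)) = 0 := by
      rw [hsum a] at h0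
      rw [map_sum] at h0
      simpa only [hh, map_mul, MvPolynomial.eval_C, map_pow, hydef] using h0
    -- partial derivatives evaluated
    have hD2 : ∀ i : Fin (n + 1), ∑ j : ZMod (n + 1),
        b a j * (((e₀ : (AlgebraicClosure K)) + 1) * y j ^ e₀ * β j ^ (i : ℕ) * y (j + c)
          + y j ^ (e₀ + 1) * β (j + c) ^ (i : ℕ)) = 0 := by
      intro i
      have h := hD i
      rw [← MvPolynomial.pderiv_map (φ := ι)] at h
      rw [hsum a] at h
      rw [map_sum, map_sum] at h
      simpa only [MvPolynomial.pderiv_C_mul, map_mul, MvPolynomial.eval_C,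
        hh_pderiv_eval β e₀ c t i, hydef] using h
    set w : ZMod (n + 1) → (AlgebraicClosure K) := fun j =>
      b a j * (((e₀ : (AlgebraicClosure K)) + 1) * y j ^ e₀ * y (j + c)) + b a (j - c) * y (j - c) ^ (e₀ + 1)
      with hwdef
    have hw0 : ∀ j, w j = 0 := by
      have := N3 w (fun i => ?_)
      · intro j; rw [this]; rfl
      -- show ∑ j, w j * β j ^ i = 0
      have hreidx : ∑ j : ZMod (n + 1), (b a j * y j ^ (e₀ + 1)) * β (j + c) ^ (i : ℕ)
          = ∑ j : ZMod (n + 1), (b a (j - c) * y (j - c) ^ (e₀ + 1)) * β j ^ (i : ℕ) := by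
        refine Fintype.sum_equiv (Equiv.addRight c) _ _ fun j => ?_
        simp [add_sub_cancel_right]
      calc ∑ j : ZMod (n + 1), w j * β j ^ (i : ℕ)
          = ∑ j : ZMod (n + 1), ((b a j * (((e₀ : (AlgebraicClosure K)) + 1) * y j ^ e₀ * y (j + c))) * β j ^ (i : ℕ)
            + (b a (j - c) * y (j - c) ^ (e₀ + 1)) * β j ^ (i : ℕ)) := by
            refine Finset.sum_congr rfl fun j _ => ?_
            rw [hwdef]; ring
        _ = ∑ j : ZMod (n + 1), ((b a j * (((e₀ : (AlgebraicClosure K)) + 1) * y j ^ e₀ * y (j + c))) * β j ^ (i : ℕ)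
            + (b a j * y j ^ (e₀ + 1)) * β (j + c) ^ (i : ℕ)) := by
            rw [Finset.sum_add_distrib, Finset.sum_add_distrib, hreidx]
        _ = ∑ j : ZMod (n + 1),
            b a j * (((e₀ : (AlgebraicClosure K)) + 1) * y j ^ e₀ * β j ^ (i : ℕ) * y (j + c)
              + y j ^ (e₀ + 1) * β (j + c) ^ (i : ℕ)) := by
            refine Finset.sum_congr rfl fun j _ => ?_
            ring
        _ = 0 := hD2 i
    -- case split
    by_cases hpd : p ∣ (e₀ + 2)
    · -- cyclic case
      have hc1 : c = 1 := by rw [hcdef, if_pos hpd]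
      have hpm : ¬ p ∣ (n + 1) := fun h2 => hp (Nat.dvd_gcd hpd h2)
      have hd0 : (e₀ : (AlgebraicClosure K)) + 2 = 0 := by
        have h2 : ((e₀ + 2 : ℕ) : (AlgebraicClosure K)) = 0 := (CharP.cast_eq_zero_iff (AlgebraicClosure K) p _).mpr hpd
        push_cast at h2
        exact h2
      have hstar : ∀ j, b a j * y j ^ e₀ * y (j + 1) = b a (j - 1) * y (j - 1) ^ (e₀ + 1) := by
        intro j
        have h2 := hw0 j
        rw [hwdef, hc1] at h2
        simp only at h2
        linear_combination (-1 : (AlgebraicClosure K)) * h2 + (b a j * y j ^ e₀ * y (j + 1)) * hd0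
      have hyne : ∀ j, y j ≠ 0 := by
        by_contra h2
        push_neg at h2
        obtain ⟨j0, hj0⟩ := h2
        have hyall : ∀ j, y j = 0 := by
          rcases Nat.eq_zero_or_pos e₀ with he0 | he0
          · -- d = 2, p = 2, step by 2
            subst he0
            have hp2 : p = 2 := (Nat.prime_dvd_prime_iff_eq hpp Nat.prime_two).mp hpd
            have hunit : IsUnit (2 : ZMod (n + 1)) := by
              rw [show (2 : ZMod (n + 1)) = ((2 : ℕ) : ZMod (n + 1)) by push_cast; ring]
              rw [ZMod.isUnit_iff_coprime]
              exact (Nat.Prime.coprime_iff_not_dvd Nat.prime_two).mpr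
                (by rw [← hp2]; exact hpm)
            refine zmod_cover_sub2 hunit (fun j => y j = 0) j0 hj0 (fun j hj => ?_)
            show y (j - 2) = 0
            have h3 := hstar (j - 1)
            rw [sub_add_cancel, pow_zero, mul_one, zero_add, pow_one] at h3
            rw [hj, mul_zero] at h3
            have h4 := (hbne a ha (j - 1 - 1))
            rcases mul_eq_zero.mp h3.symm with h5 | h5
            · exact absurd h5 h4
            · rw [show j - 2 = j - 1 - 1 by ring]
              exact h5
          · refine zmod_cover_sub (fun j => y j = 0) j0 hj0 (fun j hj => ?_)
            show y (j - 1) = 0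
            have h3 := hstar j
            rw [hj, zero_pow he0.ne', mul_zero, zero_mul] at h3
            have h4 := hbne a ha (j - 1)
            rcases mul_eq_zero.mp h3.symm with h5 | h5
            · exact absurd h5 h4
            · exact pow_eq_zero_iff (by omega) |>.mp h5
        apply ht
        refine N1 t (fun j => ?_)
        rw [← hyeq j]
        exact hyall j
      -- all terms equal, sum = (n+1) * T 0 ≠ 0
      have hTT : ∀ j, b a j * (y j ^ (e₀ + 1) * y (j + 1))
          = b a (j - 1) * (y (j - 1) ^ (e₀ + 1) * y (j - 1 + 1)) := by
        intro j
        rw [sub_add_cancel]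
        linear_combination y j * hstar j
      have hT0 : ∀ j, b a j * (y j ^ (e₀ + 1) * y (j + 1))
          = b a 0 * (y 0 ^ (e₀ + 1) * y (0 + 1)) := by
        refine zmod_cover (fun j => b a j * (y j ^ (e₀ + 1) * y (j + 1))
          = b a 0 * (y 0 ^ (e₀ + 1) * y (0 + 1))) 0 rfl (fun j hj => ?_)
        show b a (j + 1) * (y (j + 1) ^ (e₀ + 1) * y (j + 1 + 1)) = b a 0 * (y 0 ^ (e₀ + 1) * y (0 + 1))
        have h2 := hTT (j + 1)
        rw [add_sub_cancel_right] at h2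
        rw [h2]
        exact hj
      rw [hc1] at h0'
      rw [Finset.sum_congr rfl (fun j _ => hT0 j)] at h0'
      rw [Finset.sum_const, Finset.card_univ] at h0'
      have hcard : Fintype.card (ZMod (n + 1)) = n + 1 := by simp
      rw [hcard, nsmul_eq_mul] at h0'
      have hm0 : ((n + 1 : ℕ) : (AlgebraicClosure K)) ≠ 0 := by
        rw [Ne, CharP.cast_eq_zero_iff (AlgebraicClosure K) p]
        exact hpm
      have hT0ne : b a 0 * (y 0 ^ (e₀ + 1) * y (0 + 1)) ≠ 0 := by
        apply mul_ne_zero (hbne a ha 0)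
        exact mul_ne_zero (pow_ne_zero _ (hyne 0)) (hyne (0 + 1))
      exact (mul_ne_zero hm0 hT0ne) h0'
    · -- diagonal case
      have hc0 : c = 0 := by rw [hcdef, if_neg hpd]
      have hdne : ((e₀ : (AlgebraicClosure K)) + 2) ≠ 0 := by
        intro h2
        apply hpd
        rw [← CharP.cast_eq_zero_iff (AlgebraicClosure K) p]
        push_cast
        exact h2
      have hy0 : ∀ j, y j = 0 := by
        intro j
        have h2 := hw0 j
        rw [hwdef, hc0] at h2
        simp only [add_zero, sub_zero] at h2
        have h3 : ((e₀ : (AlgebraicClosure K)) + 2) * (b a j * y j ^ (e₀ + 1)) = 0 := by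
          linear_combination h2
        rcases mul_eq_zero.mp h3 with h4 | h4
        · exact absurd h4 hdne
        rcases mul_eq_zero.mp h4 with h5 | h5
        · exact absurd h5 (hbne a ha j)
        · exact pow_eq_zero_iff (by omega) |>.mp h5
      apply ht
      refine N1 t (fun j => ?_)
      rw [← hyeq j]
      exact hy0 j
end

section
/- Let K be a field of characteristic p > 0 and let d ≥ 2, n ≥ 1 be integers such that p divides d but p does not divide n+1. If c_0, c_1, …, c_n ∈ K are all nonzero, then the Klein-type polynomial F = c_0 x_0^{d-1} x_1 + c_1 x_1^{d-1} x_2 + … + c_{n-1} x_{n-1}^{d-1} x_n + c_n x_n^{d-1} x_0 cuts out a smooth hypersurface in ℙ^n. -/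
open MvPolynomial

theorem eval_pderiv_term {L : Type*} [CommRing L] {n : ℕ} (a : L) (e : ℕ) (t : Fin (n+1) → L)
    (i j k : Fin (n+1)) (hik : i ≠ k) :
    eval t (pderiv j (C a * X i ^ e * X k)) =
      (if j = i then a * e * t i ^ (e-1) * t k else 0) +
      (if j = k then a * t i ^ e else 0) := by
  rcases eq_or_ne j i with rfl | hji <;> rcases eq_or_ne j k with rfl | hjk
  · exact absurd rfl hik
  · simp only [pderiv_mul, pderiv_pow, pderiv_C, pderiv_X_self, pderiv_X_of_ne (Ne.symm hjk),
      map_add, map_mul, eval_C, eval_X, eval_pow, map_natCast, map_one, map_zero,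
      eq_self_iff_true, if_true, if_neg hjk, mul_zero, zero_mul, add_zero, zero_add, mul_one]
    ring
  · simp only [pderiv_mul, pderiv_pow, pderiv_C, pderiv_X_self, pderiv_X_of_ne (Ne.symm hji),
      map_add, map_mul, eval_C, eval_X, eval_pow, map_natCast, map_one, map_zero,
      eq_self_iff_true, if_true, if_neg hji, mul_zero, zero_mul, add_zero, zero_add, mul_one]
  · simp only [pderiv_mul, pderiv_pow, pderiv_C, pderiv_X_of_ne (Ne.symm hji),
      pderiv_X_of_ne (Ne.symm hjk), map_add, map_mul, eval_C, eval_X, eval_pow,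
      map_zero, if_neg hji, if_neg hjk, mul_zero, zero_mul, add_zero, zero_add]


/-- If `char K = p > 0` divides `d` but not `n + 1`, and all `cᵢ ≠ 0`,
then the Klein-type polynomial
`F = c₀x₀^{d-1}x₁ + c₁x₁^{d-1}x₂ + ⋯ + cₙxₙ^{d-1}x₀` (indices cyclic modulo `n + 1`)
cuts out a smooth hypersurface in `ℙ^n`. -/
theorem klein_type_smooth
    {K : Type*} [Field K] (p : ℕ) [CharP K p] (hp0 : 0 < p)
    (n d : ℕ) (hn : 1 ≤ n) (hd : 2 ≤ d)
    (hpd : p ∣ d) (hpn : ¬ p ∣ (n + 1)) (c : Fin (n + 1) → K) (hc : ∀ i, c i ≠ 0) :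
    CutsOutSmoothHypersurface
      (∑ i : Fin (n + 1), C (c i) * X i ^ (d - 1) * X (i + 1)) := by
  intro t ht h
  obtain ⟨hF, hD⟩ := h
  set φ := algebraMap K (AlgebraicClosure K) with hφdef
  haveI : CharP (AlgebraicClosure K) p := charP_of_injective_algebraMap φ.injective p
  -- basic facts
  have hone : (1 : Fin (n+1)) ≠ 0 := by
    intro h
    have h1 := congrArg Fin.val h
    rw [Fin.val_one'] at h1
    simp at h1
    omega
  have hne : ∀ i : Fin (n+1), i ≠ i + 1 := by
    intro i hi
    exact hone (left_eq_add.mp hi)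
  have hdL : ((d : ℕ) : AlgebraicClosure K) = 0 :=
    (CharP.cast_eq_zero_iff _ p d).mpr hpd
  have hdm1 : (((d - 1 : ℕ)) : AlgebraicClosure K) = -1 := by
    rw [Nat.cast_sub (by omega : 1 ≤ d), hdL, Nat.cast_one, zero_sub]
  have hnL : ((n + 1 : ℕ) : AlgebraicClosure K) ≠ 0 :=
    fun h => hpn ((CharP.cast_eq_zero_iff _ p _).mp h)
  have hφ : ∀ i, φ (c i) ≠ 0 := fun i h => hc i ((map_eq_zero φ).mp h)
  -- evaluation of F
  have hFt : ∑ j : Fin (n+1), φ (c j) * t j ^ (d-1) * t (j+1) = 0 := by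
    have h := hF
    simp only [map_sum, map_mul, map_pow, MvPolynomial.map_C, MvPolynomial.map_X,
      eval_mul, eval_pow, eval_C, eval_X] at h
    exact h
  -- the key relation from the partial derivatives
  have key : ∀ j : Fin (n+1),
      φ (c (j-1)) * t (j-1) ^ (d-1) = φ (c j) * t j ^ (d-2) * t (j+1) := by
    intro j
    have h := hD j
    have hterm : ∀ i : Fin (n+1),
        eval t (map φ (pderiv j (C (c i) * X i ^ (d-1) * X (i+1)))) =
          (if j = i then φ (c i) * ((d-1 : ℕ) : AlgebraicClosure K) * t i ^ (d-1-1) * t (i+1)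
            else 0) +
          (if j = i + 1 then φ (c i) * t i ^ (d-1) else 0) := by
      intro i
      rw [← pderiv_map]
      have hmap : map φ (C (c i) * X i ^ (d - 1) * X (i+1))
          = C (φ (c i)) * X i ^ (d-1) * X (i+1) := by
        simp
      rw [hmap, eval_pderiv_term _ _ _ _ _ _ (hne i)]
    simp only [map_sum] at h
    rw [Finset.sum_congr rfl (fun i _ => hterm i), Finset.sum_add_distrib] at h
    have hcond : ∀ i : Fin (n+1), (j = i + 1) = (j - 1 = i) :=
      fun i => propext sub_eq_iff_eq_add.symm
    simp only [hcond, Finset.sum_ite_eq, Finset.mem_univ, if_true] at h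
    rw [hdm1, show d - 1 - 1 = d - 2 from by omega] at h
    linear_combination h
  -- the monomial values are all equal
  have hmstep : ∀ j : Fin (n+1),
      φ (c j) * t j ^ (d-1) * t (j+1)
        = φ (c (j+1)) * t (j+1) ^ (d-1) * t (j+1+1) := by
    intro j
    have h := key (j + 1)
    rw [add_sub_cancel_right] at h
    have e1 : t (j+1) ^ (d-2) * t (j+1) = t (j+1) ^ (d-1) := by
      rw [← pow_succ]
      congr 1
      omega
    calc φ (c j) * t j ^ (d-1) * t (j+1)
        = φ (c (j+1)) * t (j+1) ^ (d-2) * t (j+1+1) * t (j+1) := by rw [h]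
      _ = φ (c (j+1)) * (t (j+1) ^ (d-2) * t (j+1)) * t (j+1+1) := by ring
      _ = φ (c (j+1)) * t (j+1) ^ (d-1) * t (j+1+1) := by rw [e1]
  open Fin.NatCast in
  have hmall : ∀ j : Fin (n+1),
      φ (c j) * t j ^ (d-1) * t (j+1) = φ (c 0) * t 0 ^ (d-1) * t (0+1) := by
    have hk : ∀ k : ℕ,
        φ (c (k : Fin (n+1))) * t (k : Fin (n+1)) ^ (d-1) * t ((k : Fin (n+1))+1)
          = φ (c 0) * t 0 ^ (d-1) * t (0+1) := by
      intro k
      induction k with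
      | zero => norm_num
      | succ k ih =>
        rw [Nat.cast_add, Nat.cast_one, ← hmstep]
        exact ih
    intro j
    have h := hk j.val
    rwa [Fin.cast_val_eq_self] at h
  -- all monomial values vanish
  have hm0 : φ (c 0) * t 0 ^ (d-1) * t (0+1) = 0 := by
    have h2 := (Finset.sum_congr rfl fun j _ => hmall j).symm.trans hFt
    rw [Finset.sum_const, Finset.card_univ, Fintype.card_fin, nsmul_eq_mul] at h2
    rcases mul_eq_zero.mp h2 with h | h
    · exact absurd h (by exact_mod_cast hnL)
    · exact h
  have hmz : ∀ j : Fin (n+1), φ (c j) * t j ^ (d-1) * t (j+1) = 0 :=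
    fun j => (hmall j).trans hm0
  have hzero_or : ∀ j : Fin (n+1), t j = 0 ∨ t (j+1) = 0 := by
    intro j
    rcases mul_eq_zero.mp (hmz j) with h | h
    · rcases mul_eq_zero.mp h with h | h
      · exact absurd h (hφ j)
      · exact Or.inl (pow_eq_zero_iff (by omega : d - 1 ≠ 0) |>.mp h)
    · exact Or.inr h
  obtain ⟨i0, hi0⟩ := Function.ne_iff.mp ht
  simp only [Pi.zero_apply] at hi0
  have h1 : t (i0 + 1) = 0 := (hzero_or i0).resolve_left hi0
  by_cases hd2 : d = 2
  · -- characteristic 2, d = 2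
    subst hd2
    have hprime : p.Prime :=
      (CharP.char_is_prime_or_zero K p).resolve_right (by omega)
    have hp2 : p = 2 := (Nat.prime_dvd_prime_iff_eq hprime Nat.prime_two).mp hpd
    have hstep : ∀ j : Fin (n+1), t j ≠ 0 → t (j + 1 + 1) ≠ 0 := by
      intro j hj
      have h := key (j + 1)
      rw [add_sub_cancel_right] at h
      norm_num at h
      intro hz
      rw [hz, mul_zero] at h
      exact mul_ne_zero (hφ j) hj h
    open Fin.NatCast Fin.CommRing in
    have hiter : ∀ k : ℕ, t (i0 + ((2 * k : ℕ) : Fin (n+1))) ≠ 0 := by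
      intro k
      induction k with
      | zero => simpa using hi0
      | succ k ih =>
        have e2 : ((2 * (k+1) : ℕ) : Fin (n+1)) = ((2*k : ℕ) : Fin (n+1)) + 1 + 1 := by
          push_cast
          ring
        rw [e2, show i0 + (((2*k : ℕ) : Fin (n+1)) + 1 + 1)
            = (i0 + ((2*k : ℕ) : Fin (n+1))) + 1 + 1 from by ring]
        exact hstep _ ih
    open Fin.NatCast Fin.CommRing in
    have hk0 : ((2 * ((n+2)/2) : ℕ) : Fin (n+1)) = 1 := by
      rw [show 2 * ((n+2)/2) = n + 2 from by rw [hp2] at hpn; omega,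
        show ((n + 2 : ℕ) : Fin (n+1)) = ((n+1 : ℕ) : Fin (n+1)) + 1 from by push_cast; ring,
        Fin.natCast_self, zero_add]
    have h2 := hiter ((n+2)/2)
    rw [hk0] at h2
    exact h2 h1
  · -- d ≥ 3
    have h := key (i0 + 1)
    rw [add_sub_cancel_right, h1, zero_pow (by omega : d - 2 ≠ 0), mul_zero, zero_mul] at h
    exact hi0 (pow_eq_zero_iff (by omega : d - 1 ≠ 0) |>.mp
      ((mul_eq_zero.mp h).resolve_left (hφ i0)))
end

section
/- Let n be an odd positive integer and let K be a field of characteristic 2 (not necessarily finitely generated). Then there does not exist a K-smooth linear system of projective dimension n of quadric hypersurfaces in ℙ^n; that is, for any linearly independent homogeneous polynomials F_0, …, F_n of degree 2 in K[x_0, …, x_n], there exist a_0, …, a_n ∈ K, not all zero, such that a_0F_0 + … + a_nF_n does not cut out a smooth hypersurface in ℙ^n. -/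
open MvPolynomial

section Aux

variable {R : Type*} [CommRing R] {m : ℕ}

lemma degree_two_classify (d : Fin m →₀ ℕ) (hd : d.degree = 2) :
    (∃ j, d = Finsupp.single j 2) ∨
      ∃ p q, p ≠ q ∧ d = Finsupp.single p 1 + Finsupp.single q 1 := by
  have hcard : d.support.card ≤ 2 := by
    have h1 : d.support.card = ∑ i ∈ d.support, 1 := by simp
    calc d.support.card = ∑ i ∈ d.support, 1 := h1
      _ ≤ ∑ i ∈ d.support, d i :=
        Finset.sum_le_sum fun i hi => Nat.one_le_iff_ne_zero.2 (Finsupp.mem_support_iff.1 hi)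
      _ = 2 := hd
  rcases hc : d.support.card with _ | _ | _ | k
  · exfalso
    have : d = 0 := Finsupp.support_eq_empty.1 (Finset.card_eq_zero.1 hc)
    rw [this] at hd
    simp [Finsupp.degree] at hd
  · left
    obtain ⟨j, hj⟩ := Finset.card_eq_one.mp hc
    simp only [Finsupp.degree_apply, hj, Finset.sum_singleton] at hd
    refine ⟨j, ?_⟩
    ext x
    rcases eq_or_ne x j with rfl | hx
    · simpa [Finsupp.single_apply] using hd
    · have hxs : x ∉ d.support := by rw [hj]; simpa using hx
      rw [Finsupp.notMem_support_iff.1 hxs, Finsupp.single_apply, if_neg (Ne.symm hx)]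
  · right
    obtain ⟨p, q, hpq, hs⟩ := Finset.card_eq_two.mp hc
    have hp : d p ≠ 0 := Finsupp.mem_support_iff.1 (by rw [hs]; simp)
    have hq : d q ≠ 0 := Finsupp.mem_support_iff.1 (by rw [hs]; simp)
    simp only [Finsupp.degree_apply, hs, Finset.sum_pair hpq] at hd
    have hp1 : d p = 1 := by omega
    have hq1 : d q = 1 := by omega
    refine ⟨p, q, hpq, ?_⟩
    ext x
    rcases eq_or_ne x p with rfl | hxp
    · rw [hp1, Finsupp.add_apply, Finsupp.single_apply, Finsupp.single_apply, if_pos rfl,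
        if_neg (Ne.symm hpq), add_zero]
    · rcases eq_or_ne x q with rfl | hxq
      · rw [hq1, Finsupp.add_apply, Finsupp.single_apply, Finsupp.single_apply, if_pos rfl,
          if_neg hpq, zero_add]
      · have hxs : x ∉ d.support := by rw [hs]; simp [hxp, hxq]
        rw [Finsupp.notMem_support_iff.1 hxs, Finsupp.add_apply, Finsupp.single_apply,
          Finsupp.single_apply, if_neg (Ne.symm hxp), if_neg (Ne.symm hxq), add_zero]
  · omega

lemma single_add_single_ne_single_two {j k l : Fin m} (hjk : j ≠ k) :
    Finsupp.single j 1 + Finsupp.single k 1 ≠ Finsupp.single l 2 := by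
  intro h
  have hj := DFunLike.congr_fun h j
  rw [Finsupp.add_apply, Finsupp.single_apply, Finsupp.single_apply, Finsupp.single_apply,
    if_pos rfl, if_neg (Ne.symm hjk)] at hj
  split_ifs at hj <;> omega

lemma single_add_single_eq_iff {j k p q : Fin m} (hjk : j ≠ k) (hpq : p ≠ q) :
    Finsupp.single j 1 + Finsupp.single k 1 = Finsupp.single p 1 + Finsupp.single q 1 ↔
      (j = p ∧ k = q) ∨ (j = q ∧ k = p) := by
  constructor
  · intro h
    have hj := DFunLike.congr_fun h j
    have hk := DFunLike.congr_fun h k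
    rw [Finsupp.add_apply, Finsupp.add_apply, Finsupp.single_apply, Finsupp.single_apply,
      Finsupp.single_apply, Finsupp.single_apply, if_pos rfl, if_neg (Ne.symm hjk)] at hj
    rw [Finsupp.add_apply, Finsupp.add_apply, Finsupp.single_apply, Finsupp.single_apply,
      Finsupp.single_apply, Finsupp.single_apply, if_pos rfl, if_neg hjk] at hk
    by_cases hpj : p = j
    · have hpk : ¬ p = k := by rw [hpj]; exact hjk
      rw [if_neg hpk] at hk
      rcases eq_or_ne q k with hqk | hqk
      · exact Or.inl ⟨hpj.symm, hqk.symm⟩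
      · rw [if_neg hqk] at hk; omega
    · rw [if_neg hpj] at hj
      rcases eq_or_ne q j with hqj | hqj
      · have hqk : ¬ q = k := by rw [hqj]; exact hjk
        rw [if_neg hqk, add_zero] at hk
        rcases eq_or_ne p k with hpk | hpk
        · exact Or.inr ⟨hqj.symm, hpk.symm⟩
        · rw [if_neg hpk] at hk; omega
      · rw [if_neg hqj] at hj; omega
  · rintro (⟨rfl, rfl⟩ | ⟨rfl, rfl⟩)
    · rfl
    · rw [add_comm]

end Aux

section Aux2

variable {R : Type*} [CommRing R] {m : ℕ}

/-- The coefficient matrix of the alternating bilinear form attached to a quadric. -/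
noncomputable def Bmat (Q : MvPolynomial (Fin m) R) : Matrix (Fin m) (Fin m) R :=
  Matrix.of fun j k =>
    if j = k then 0 else coeff (Finsupp.single j 1 + Finsupp.single k 1) Q

lemma Bmat_apply (Q : MvPolynomial (Fin m) R) (j k : Fin m) :
    Bmat Q j k = if j = k then 0 else coeff (Finsupp.single j 1 + Finsupp.single k 1) Q := rfl

lemma Bmat_diag (Q : MvPolynomial (Fin m) R) (j : Fin m) : Bmat Q j j = 0 := if_pos rfl

lemma Bmat_symm (Q : MvPolynomial (Fin m) R) (j k : Fin m) : Bmat Q j k = Bmat Q k j := by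
  rcases eq_or_ne j k with rfl | h
  · rfl
  · rw [Bmat_apply, Bmat_apply, if_neg h, if_neg (Ne.symm h), add_comm]

lemma Bmat_zero : Bmat (0 : MvPolynomial (Fin m) R) = 0 := by
  ext j k
  rw [Bmat_apply]
  split_ifs <;> simp

lemma Bmat_add (P Q : MvPolynomial (Fin m) R) : Bmat (P + Q) = Bmat P + Bmat Q := by
  ext j k
  rw [Matrix.add_apply, Bmat_apply, Bmat_apply, Bmat_apply]
  split_ifs <;> simp [coeff_add]

lemma Bmat_sum {ι : Type*} (s : Finset ι) (f : ι → MvPolynomial (Fin m) R) :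
    Bmat (∑ i ∈ s, f i) = ∑ i ∈ s, Bmat (f i) := by
  classical
  induction s using Finset.cons_induction with
  | empty => simp [Bmat_zero]
  | cons i s hi ih => rw [Finset.sum_cons, Finset.sum_cons, Bmat_add, ih]

lemma sum_mulVec {ι : Type*} (s : Finset ι) (A : ι → Matrix (Fin m) (Fin m) R)
    (t : Fin m → R) : (∑ i ∈ s, A i).mulVec t = ∑ i ∈ s, (A i).mulVec t := by
  ext j
  simp only [Matrix.mulVec, dotProduct, Finset.sum_apply, Matrix.sum_apply,
    Finset.sum_mul]
  exact Finset.sum_comm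

lemma sum_double_ite {p q : Fin m} (hpq : p ≠ q) (f g : Fin m → R) :
    ∑ j, (if j = p then f j else if j = q then g j else 0) = f p + g q := by
  have h : ∀ j : Fin m, (if j = p then f j else if j = q then g j else 0) =
      (if j = p then f j else 0) + (if j = q then g j else 0) := by
    intro j
    by_cases h1 : j = p
    · subst h1; rw [if_pos rfl, if_pos rfl, if_neg hpq, add_zero]
    · rw [if_neg h1, if_neg h1, zero_add]
  rw [Finset.sum_congr rfl fun j _ => h j, Finset.sum_add_distrib]
  rw [Finset.sum_ite_eq' Finset.univ p f, Finset.sum_ite_eq' Finset.univ q g]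
  simp

variable [CharP R 2]

lemma pderiv_monomial_single_two (j k : Fin m) (c : R) :
    pderiv j (monomial (Finsupp.single k 2) c) = 0 := by
  rw [pderiv_monomial]
  rcases eq_or_ne k j with rfl | h
  · rw [Finsupp.single_apply, if_pos rfl]
    norm_num
    rw [CharTwo.two_eq_zero, mul_zero]
  · rw [Finsupp.single_apply, if_neg h, Nat.cast_zero, mul_zero, monomial_zero]

lemma pderiv_monomial_pair {p q : Fin m} (hpq : p ≠ q) (c : R) (j : Fin m) :
    pderiv j (monomial (Finsupp.single p 1 + Finsupp.single q 1) c) =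
      if j = p then monomial (Finsupp.single q 1) c
      else if j = q then monomial (Finsupp.single p 1) c else 0 := by
  rw [pderiv_monomial]
  rcases eq_or_ne j p with rfl | hp
  · rw [if_pos rfl]
    have h1 : (Finsupp.single j 1 + Finsupp.single q 1) - Finsupp.single j 1 =
        Finsupp.single q 1 := by
      ext x
      simp only [Finsupp.tsub_apply, Finsupp.add_apply]
      omega
    have h2 : ((Finsupp.single j 1 + Finsupp.single q 1 : Fin m →₀ ℕ)) j = 1 := by
      rw [Finsupp.add_apply, Finsupp.single_apply, Finsupp.single_apply, if_pos rfl,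
        if_neg (Ne.symm hpq), add_zero]
    rw [h1, h2, Nat.cast_one, mul_one]
  · rcases eq_or_ne j q with rfl | hq
    · rw [if_neg hp, if_pos rfl]
      have h1 : (Finsupp.single p 1 + Finsupp.single j 1) - Finsupp.single j 1 =
          Finsupp.single p 1 := by
        ext x
        simp only [Finsupp.tsub_apply, Finsupp.add_apply]
        omega
      have h2 : ((Finsupp.single p 1 + Finsupp.single j 1 : Fin m →₀ ℕ)) j = 1 := by
        rw [Finsupp.add_apply, Finsupp.single_apply, Finsupp.single_apply, if_pos rfl,
          if_neg hpq, zero_add]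
      rw [h1, h2, Nat.cast_one, mul_one]
    · rw [if_neg hp, if_neg hq]
      have h2 : ((Finsupp.single p 1 + Finsupp.single q 1 : Fin m →₀ ℕ)) j = 0 := by
        rw [Finsupp.add_apply, Finsupp.single_apply, Finsupp.single_apply,
          if_neg (Ne.symm hp), if_neg (Ne.symm hq), add_zero]
      rw [h2, Nat.cast_zero, mul_zero, monomial_zero]

lemma eval_monomial_single_two (t : Fin m → R) (k : Fin m) (c : R) :
    eval t (monomial (Finsupp.single k 2) c) = c * t k ^ 2 := by
  rw [eval_monomial, Finsupp.prod_single_index]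
  exact pow_zero _

lemma eval_monomial_single_one (t : Fin m → R) (k : Fin m) (c : R) :
    eval t (monomial (Finsupp.single k 1) c) = c * t k := by
  rw [eval_monomial, Finsupp.prod_single_index, pow_one]
  exact pow_zero _

lemma eval_monomial_pair (t : Fin m → R) (p q : Fin m) (c : R) :
    eval t (monomial (Finsupp.single p 1 + Finsupp.single q 1) c) = c * (t p * t q) := by
  rw [eval_monomial, Finsupp.prod_add_index' (fun i => pow_zero (t i))
    (fun a b₁ b₂ => pow_add (t a) b₁ b₂), Finsupp.prod_single_index,
    Finsupp.prod_single_index, pow_one, pow_one]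
  · exact pow_zero _
  · exact pow_zero _

end Aux2

section Aux3
variable {R : Type*} [CommRing R] {m : ℕ}

lemma Bmat_monomial_single_two (k : Fin m) (c : R) :
    Bmat (monomial (Finsupp.single k 2) c) = 0 := by
  ext j l
  rw [Bmat_apply, Matrix.zero_apply]
  split_ifs with h
  · rfl
  · rw [coeff_monomial, if_neg fun hc => single_add_single_ne_single_two h hc.symm]

lemma Bmat_monomial_pair {p q : Fin m} (hpq : p ≠ q) (c : R) (j l : Fin m) :
    Bmat (monomial (Finsupp.single p 1 + Finsupp.single q 1) c) j l =
      if (j = p ∧ l = q) ∨ (j = q ∧ l = p) then c else 0 := by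
  rw [Bmat_apply]
  by_cases h1 : j = l
  · rw [if_pos h1, if_neg]
    rintro (⟨hp', hq'⟩ | ⟨hp', hq'⟩)
    · exact hpq ((hp'.symm.trans h1).trans hq')
    · exact (Ne.symm hpq) ((hp'.symm.trans h1).trans hq')
  · rw [if_neg h1, coeff_monomial]
    by_cases h2 : (j = p ∧ l = q) ∨ (j = q ∧ l = p)
    · rw [if_pos h2, if_pos ((single_add_single_eq_iff h1 hpq).2 h2).symm]
    · rw [if_neg h2, if_neg fun hc => h2 ((single_add_single_eq_iff h1 hpq).1 hc.symm)]

lemma degree_two_of_mem_support {Q : MvPolynomial (Fin m) R} (hQ : Q.IsHomogeneous 2)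
    {d : Fin m →₀ ℕ} (hd : d ∈ Q.support) : d.degree = 2 := by
  rw [Finsupp.degree_eq_weight_one]
  exact hQ (mem_support_iff.mp hd)

lemma eval_map_comp {S : Type*} [CommRing S] (f : R →+* S) (t : Fin m → R)
    (P : MvPolynomial (Fin m) R) :
    eval (fun j => f (t j)) (map f P) = f (eval t P) := by
  rw [eval_map]
  have h := eval₂_comp_left f (RingHom.id R) t P
  rw [RingHom.comp_id] at h
  exact h.symm

lemma eval_sum_monomial (Q : MvPolynomial (Fin m) R) (x : Fin m → R) :
    eval x Q = ∑ d ∈ Q.support, eval x (monomial d (coeff d Q)) := by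
  conv_lhs => rw [← support_sum_monomial_coeff Q]
  exact map_sum _ _ _

lemma eval_pderiv_sum_monomial (Q : MvPolynomial (Fin m) R) (x : Fin m → R) (j : Fin m) :
    eval x (pderiv j Q) = ∑ d ∈ Q.support, eval x (pderiv j (monomial d (coeff d Q))) := by
  conv_lhs => rw [← support_sum_monomial_coeff Q]
  have hps : pderiv j (∑ d ∈ Q.support, monomial d (coeff d Q))
      = ∑ d ∈ Q.support, pderiv j (monomial d (coeff d Q)) := map_sum _ _ _
  rw [hps]
  exact map_sum _ _ _

variable [CharP R 2]

lemma eval_pderiv_monomial_eq {d : Fin m →₀ ℕ} (hd : d.degree = 2) (c : R) (t : Fin m → R)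
    (j : Fin m) :
    eval t (pderiv j (monomial d c)) = (Bmat (monomial d c)).mulVec t j := by
  rcases degree_two_classify d hd with ⟨k, rfl⟩ | ⟨p, q, hpq, rfl⟩
  · rw [pderiv_monomial_single_two, map_zero, Bmat_monomial_single_two, Matrix.zero_mulVec,
      Pi.zero_apply]
  · rw [pderiv_monomial_pair hpq]
    have hred : (Bmat (monomial (Finsupp.single p 1 + Finsupp.single q 1) c)).mulVec t j
        = ∑ l, (if (j = p ∧ l = q) ∨ (j = q ∧ l = p) then c else 0) * t l := by
      have h0 : (Bmat (monomial (Finsupp.single p 1 + Finsupp.single q 1) c)).mulVec t j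
          = ∑ l, Bmat (monomial (Finsupp.single p 1 + Finsupp.single q 1) c) j l * t l := rfl
      rw [h0]
      exact Finset.sum_congr rfl fun l _ => by rw [Bmat_monomial_pair hpq]
    rw [hred]
    by_cases hjp : j = p
    · rw [if_pos hjp]
      have hterm : ∀ l, (if (j = p ∧ l = q) ∨ (j = q ∧ l = p) then c else 0) * t l
          = if l = q then c * t l else 0 := by
        intro l
        rcases eq_or_ne l q with rfl | hlq
        · rw [if_pos (Or.inl ⟨hjp, rfl⟩), if_pos rfl]
        · rw [if_neg, if_neg hlq, zero_mul]
          rintro (⟨-, h⟩ | ⟨h, -⟩)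
          · exact hlq h
          · exact hpq (hjp.symm.trans h)
      rw [Finset.sum_congr rfl fun l _ => hterm l,
        Finset.sum_ite_eq' Finset.univ q fun l => c * t l, if_pos (Finset.mem_univ q),
        eval_monomial_single_one]
    · by_cases hjq : j = q
      · rw [if_neg hjp, if_pos hjq]
        have hterm : ∀ l, (if (j = p ∧ l = q) ∨ (j = q ∧ l = p) then c else 0) * t l
            = if l = p then c * t l else 0 := by
          intro l
          rcases eq_or_ne l p with rfl | hlp
          · rw [if_pos (Or.inr ⟨hjq, rfl⟩), if_pos rfl]
          · rw [if_neg, if_neg hlp, zero_mul]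
            rintro (⟨h, -⟩ | ⟨-, h⟩)
            · exact hjp h
            · exact hlp h
        rw [Finset.sum_congr rfl fun l _ => hterm l,
          Finset.sum_ite_eq' Finset.univ p fun l => c * t l, if_pos (Finset.mem_univ p),
          eval_monomial_single_one]
      · rw [if_neg hjp, if_neg hjq, map_zero]
        refine (Finset.sum_eq_zero fun l _ => ?_).symm
        rw [if_neg, zero_mul]
        rintro (⟨h, -⟩ | ⟨h, -⟩)
        · exact hjp h
        · exact hjq h

lemma eval_pderiv_eq {Q : MvPolynomial (Fin m) R} (hQ : Q.IsHomogeneous 2)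
    (t : Fin m → R) (j : Fin m) :
    eval t (pderiv j Q) = (Bmat Q).mulVec t j := by
  rw [eval_pderiv_sum_monomial]
  conv_rhs => rw [← support_sum_monomial_coeff Q]
  rw [Bmat_sum, sum_mulVec, Finset.sum_apply]
  exact Finset.sum_congr rfl fun d hd =>
    eval_pderiv_monomial_eq (degree_two_of_mem_support hQ hd) _ t j

lemma polarization {Q : MvPolynomial (Fin m) R} (hQ : Q.IsHomogeneous 2)
    (u v : Fin m → R) :
    eval (u + v) Q = eval u Q + eval v Q + ∑ j, u j * eval v (pderiv j Q) := by
  have key : ∀ d ∈ Q.support, ∀ c : R,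
      eval (u + v) (monomial d c) = eval u (monomial d c) + eval v (monomial d c)
        + ∑ j, u j * eval v (pderiv j (monomial d c)) := by
    intro d hd c
    rcases degree_two_classify d (degree_two_of_mem_support hQ hd) with
      ⟨k, rfl⟩ | ⟨p, q, hpq, rfl⟩
    · rw [eval_monomial_single_two, eval_monomial_single_two, eval_monomial_single_two]
      have hz : ∀ j : Fin m,
          u j * eval v (pderiv j (monomial (Finsupp.single k 2) c)) = 0 := by
        intro j; rw [pderiv_monomial_single_two, map_zero, mul_zero]
      rw [Finset.sum_congr rfl fun j _ => hz j, Finset.sum_const_zero, add_zero,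
        Pi.add_apply, CharTwo.add_sq, mul_add]
    · rw [eval_monomial_pair, eval_monomial_pair, eval_monomial_pair]
      have hterm : ∀ j : Fin m,
          u j * eval v (pderiv j (monomial (Finsupp.single p 1 + Finsupp.single q 1) c))
          = if j = p then u j * (c * v q) else if j = q then u j * (c * v p) else 0 := by
        intro j
        rw [pderiv_monomial_pair hpq]
        rcases eq_or_ne j p with rfl | hjp
        · rw [if_pos rfl, if_pos rfl, eval_monomial_single_one]
        · rcases eq_or_ne j q with rfl | hjq
          · rw [if_neg hjp, if_pos rfl, if_neg hjp, if_pos rfl, eval_monomial_single_one]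
          · rw [if_neg hjp, if_neg hjq, if_neg hjp, if_neg hjq, map_zero, mul_zero]
      rw [Finset.sum_congr rfl fun j _ => hterm j,
        sum_double_ite hpq (fun j => u j * (c * v q)) (fun j => u j * (c * v p)),
        Pi.add_apply, Pi.add_apply]
      ring
  have e3 : ∑ j, u j * eval v (pderiv j Q)
      = ∑ d ∈ Q.support, ∑ j, u j * eval v (pderiv j (monomial d (coeff d Q))) := by
    calc ∑ j, u j * eval v (pderiv j Q)
        = ∑ j, ∑ d ∈ Q.support, u j * eval v (pderiv j (monomial d (coeff d Q))) :=
          Finset.sum_congr rfl fun j _ => by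
            rw [eval_pderiv_sum_monomial, Finset.mul_sum]
      _ = ∑ d ∈ Q.support, ∑ j, u j * eval v (pderiv j (monomial d (coeff d Q))) :=
          Finset.sum_comm
  rw [eval_sum_monomial Q (u + v), eval_sum_monomial Q u, eval_sum_monomial Q v, e3,
    ← Finset.sum_add_distrib, ← Finset.sum_add_distrib]
  exact Finset.sum_congr rfl fun d hd => key d hd _

lemma eval_smul_sq {Q : MvPolynomial (Fin m) R} (hQ : Q.IsHomogeneous 2)
    (c : R) (x : Fin m → R) :
    eval (c • x) Q = c ^ 2 * eval x Q := by
  rw [eval_sum_monomial Q (c • x), eval_sum_monomial Q x, Finset.mul_sum]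
  refine Finset.sum_congr rfl fun d hd => ?_
  rcases degree_two_classify d (degree_two_of_mem_support hQ hd) with
    ⟨k, rfl⟩ | ⟨p, q, hpq, rfl⟩
  · rw [eval_monomial_single_two, eval_monomial_single_two, Pi.smul_apply, smul_eq_mul]
    ring
  · rw [eval_monomial_pair, eval_monomial_pair, Pi.smul_apply, Pi.smul_apply,
      smul_eq_mul, smul_eq_mul]
    ring

lemma eval_single_pderiv_self {Q : MvPolynomial (Fin m) R} (hQ : Q.IsHomogeneous 2)
    (i : Fin m) :
    eval (Pi.single i 1) (pderiv i Q) = 0 := by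
  rw [eval_pderiv_eq hQ]
  simp only [Matrix.mulVec, dotProduct, Pi.single_apply, mul_ite, mul_one, mul_zero,
    Finset.sum_ite_eq', Finset.mem_univ, if_pos]
  exact Bmat_diag Q i

end Aux3

section Matrices
open Matrix

variable {F : Type*} [Field F] [CharP F 2]

/-- An alternating matrix of odd size over a field of characteristic two has
zero determinant. -/
lemma det_alt_odd {l : ℕ} (hl : Odd l) (N : Matrix (Fin l) (Fin l) F)
    (hsym : ∀ i j, N i j = N j i) (hdiag : ∀ i, N i i = 0) : N.det = 0 := by
  classical
  set A : Matrix (Fin l) (Fin l) (MvPolynomial (Fin l × Fin l) ℤ) := Matrix.of fun i j =>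
    if i = j then 0 else if (i : ℕ) < (j : ℕ) then X (i, j) else - X (j, i) with hA
  have hAT : Aᵀ = -A := by
    refine Matrix.ext fun i j => ?_
    rw [Matrix.transpose_apply, Matrix.neg_apply, hA, Matrix.of_apply, Matrix.of_apply]
    rcases lt_trichotomy (i : ℕ) (j : ℕ) with h | h | h
    · have hij : i ≠ j := fun hc => by rw [hc] at h; exact lt_irrefl _ h
      rw [if_neg (Ne.symm hij), if_neg (by omega), if_neg hij, if_pos h]
    · have hij : i = j := Fin.ext h
      rw [if_pos hij.symm, if_pos hij, neg_zero]
    · have hij : i ≠ j := fun hc => by rw [hc] at h; exact lt_irrefl _ h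
      rw [if_neg (Ne.symm hij), if_pos h, if_neg hij, if_neg (by omega), neg_neg]
  have hdetA : A.det = 0 := by
    have h1 : A.det = -A.det := by
      conv_lhs => rw [← Matrix.det_transpose, hAT]
      rw [Matrix.det_neg, Fintype.card_fin, Odd.neg_one_pow hl, neg_one_mul]
    have h2 : (2 : MvPolynomial (Fin l × Fin l) ℤ) * A.det = 0 := by
      rw [two_mul]
      nth_rewrite 1 [h1]
      rw [neg_add_cancel]
    rcases mul_eq_zero.mp h2 with h | h
    · exfalso
      have h2' := congrArg (MvPolynomial.constantCoeff (R := ℤ) (σ := Fin l × Fin l)) h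
      rw [map_ofNat, map_zero] at h2'
      norm_num at h2'
    · exact h
  let φ : MvPolynomial (Fin l × Fin l) ℤ →+* F :=
    (MvPolynomial.aeval (R := ℤ) fun (ij : Fin l × Fin l) => N ij.1 ij.2).toRingHom
  have hmap : A.map φ = N := by
    ext i j
    rw [Matrix.map_apply, hA, Matrix.of_apply]
    rcases lt_trichotomy (i : ℕ) (j : ℕ) with h | h | h
    · have hij : i ≠ j := fun hc => by rw [hc] at h; exact lt_irrefl _ h
      rw [if_neg hij, if_pos h]
      exact aeval_X _ _
    · have hij : i = j := Fin.ext h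
      rw [if_pos hij, map_zero, hij, hdiag]
    · have hij : i ≠ j := fun hc => by rw [hc] at h; exact lt_irrefl _ h
      rw [if_neg hij, if_neg (by omega), map_neg, CharTwo.neg_eq]
      rw [show φ (X (j, i)) = N j i from aeval_X _ _]
      exact (hsym i j).symm
  calc N.det = (A.map φ).det := by rw [hmap]
    _ = φ A.det := (RingHom.map_det φ A).symm
    _ = 0 := by rw [hdetA, map_zero]

/-- key corank lemma: a singular alternating matrix of even size `n+1` with `n` odd
whose kernel contains `t` has a kernel vector not proportional to `t`. -/
lemma exists_kernel_not_multiple {n : ℕ} (hn : Odd n)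
    (M : Matrix (Fin (n + 1)) (Fin (n + 1)) F)
    (hsym : ∀ i j, M i j = M j i) (hdiag : ∀ i, M i i = 0)
    (t : Fin (n + 1) → F) (ht : t ≠ 0) (hMt : M.mulVec t = 0) :
    ∃ u, M.mulVec u = 0 ∧ ∀ c : F, u ≠ c • t := by
  classical
  by_contra hcon
  push_neg at hcon
  -- hcon : ∀ u, M.mulVec u = 0 → ∃ c, u = c • t
  obtain ⟨p, hp⟩ : ∃ p, t p ≠ 0 := by
    by_contra h
    push_neg at h
    exact ht (funext fun i => h i)
  set N : Matrix (Fin n) (Fin n) F := M.submatrix p.succAbove p.succAbove with hN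
  have hdetN : N.det = 0 :=
    det_alt_odd hn N (fun i j => hsym _ _) (fun i => hdiag _)
  obtain ⟨v, hv0, hvN⟩ := (Matrix.exists_mulVec_eq_zero_iff).2 hdetN
  set w : Fin (n + 1) → F := p.insertNth 0 v with hw
  have hwp : w p = 0 := by rw [hw]; exact Fin.insertNth_apply_same (α := fun _ => F) p 0 v
  have hws : ∀ i, w (p.succAbove i) = v i := by
    intro i; rw [hw]; exact Fin.insertNth_apply_succAbove (α := fun _ => F) p 0 v i
  have hMw_off : ∀ i : Fin n, M.mulVec w (p.succAbove i) = 0 := by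
    intro i
    have h0 : M.mulVec w (p.succAbove i) = ∑ k, M (p.succAbove i) k * w k := rfl
    rw [h0, Fin.sum_univ_succAbove (fun k => M (p.succAbove i) k * w k) p, hwp, mul_zero,
      zero_add]
    have h1 : ∀ k : Fin n, M (p.succAbove i) (p.succAbove k) * w (p.succAbove k)
        = N i k * v k := by
      intro k; rw [hws]; rfl
    rw [Finset.sum_congr rfl fun k _ => h1 k]
    exact congrFun hvN i
  have hdot : t ⬝ᵥ M.mulVec w = 0 := by
    rw [Matrix.dotProduct_mulVec]
    have hvm : Matrix.vecMul t M = M.mulVec t := by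
      funext k
      have h1 : Matrix.vecMul t M k = ∑ j, t j * M j k := rfl
      have h2 : M.mulVec t k = ∑ j, M k j * t j := rfl
      rw [h1, h2]
      exact Finset.sum_congr rfl fun j _ => by rw [hsym j k, mul_comm]
    rw [hvm, hMt, zero_dotProduct]
  have hMwp : M.mulVec w p = 0 := by
    have h0 : t ⬝ᵥ M.mulVec w = ∑ k, t k * M.mulVec w k := rfl
    rw [h0, Fin.sum_univ_succAbove (fun k => t k * M.mulVec w k) p] at hdot
    rw [Finset.sum_congr rfl (fun k _ => by rw [hMw_off k, mul_zero]),
      Finset.sum_const_zero, add_zero] at hdot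
    rcases mul_eq_zero.mp hdot with h | h
    · exact absurd h hp
    · exact h
  have hMw : M.mulVec w = 0 := by
    funext j
    rcases eq_or_ne j p with rfl | hj
    · exact hMwp
    · obtain ⟨i, rfl⟩ := Fin.exists_succAbove_eq hj
      exact hMw_off i
  obtain ⟨c, hc⟩ := hcon w hMw
  have hc0 : c = 0 := by
    have h0 := congrFun hc p
    rw [hwp, Pi.smul_apply, smul_eq_mul] at h0
    rcases mul_eq_zero.mp h0.symm with h | h
    · exact h
    · exact absurd h hp
  apply hv0
  funext i
  have := hws i
  rw [hc, hc0, zero_smul] at this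
  exact this.symm
end Matrices

section MainProof
open Matrix

variable {K : Type*} [Field K] [CharP K 2]

lemma hom_sum_smul {n : ℕ} (F : Fin (n + 1) → MvPolynomial (Fin (n + 1)) K)
    (hhom : ∀ i, (F i).IsHomogeneous 2) (a : Fin (n + 1) → K) :
    (∑ i, a i • F i).IsHomogeneous 2 := by
  rw [← mem_homogeneousSubmodule]
  exact Submodule.sum_mem _ fun i _ =>
    Submodule.smul_mem _ _ ((mem_homogeneousSubmodule _ _).2 (hhom i))

lemma exists_kernel_coeffs {n : ℕ} (F : Fin (n + 1) → MvPolynomial (Fin (n + 1)) K)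
    (hhom : ∀ i, (F i).IsHomogeneous 2) :
    ∃ a : Fin (n + 1) → K, a ≠ 0 ∧
      ∀ j, eval (Pi.single 0 1 : Fin (n + 1) → K) (pderiv j (∑ i, a i • F i)) = 0 := by
  classical
  set t₀ : Fin (n + 1) → K := Pi.single 0 1 with ht₀
  have hkey : ∀ (a : Fin (n + 1) → K) (j : Fin (n + 1)),
      eval t₀ (pderiv j (∑ i, a i • F i)) = ∑ i, a i * eval t₀ (pderiv j (F i)) := by
    intro a j
    have h1 : pderiv j (∑ i, a i • F i) = ∑ i, pderiv j (a i • F i) := map_sum _ _ _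
    have h2 : eval t₀ (∑ i, pderiv j (a i • F i)) = ∑ i, eval t₀ (pderiv j (a i • F i)) :=
      map_sum _ _ _
    rw [h1, h2]
    refine Finset.sum_congr rfl fun i _ => ?_
    rw [Derivation.map_smul, smul_eq_C_mul, _root_.map_mul, eval_C]
  set ψ : (Fin (n + 1) → K) →ₗ[K] (Fin (n + 1) → K) :=
    { toFun := fun a => fun j => ∑ i, a i * eval t₀ (pderiv j (F i))
      map_add' := by
        intro a b; funext j
        simp only [Pi.add_apply, add_mul, Finset.sum_add_distrib]
      map_smul' := by
        intro c a; funext j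
        simp only [Pi.smul_apply, smul_eq_mul, RingHom.id_apply, Finset.mul_sum, mul_assoc] }
    with hψ
  have hψ0 : ∀ a, ψ a 0 = 0 := by
    intro a
    have h1 : ψ a 0 = eval t₀ (pderiv 0 (∑ i, a i • F i)) := (hkey a 0).symm
    rw [h1, ht₀]
    exact eval_single_pderiv_self (hom_sum_smul F hhom a) 0
  have hker : ∃ a, a ≠ 0 ∧ ψ a = 0 := by
    by_contra hcon
    push_neg at hcon
    have hkerbot : LinearMap.ker ψ = ⊥ := by
      rw [LinearMap.ker_eq_bot']
      intro a ha
      by_contra h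
      exact hcon a h ha
    have hinj : Function.Injective ψ := LinearMap.ker_eq_bot.mp hkerbot
    have hle : LinearMap.range ψ ≤
        LinearMap.ker (LinearMap.proj 0 : (Fin (n + 1) → K) →ₗ[K] K) := by
      rintro v ⟨a, rfl⟩
      exact LinearMap.mem_ker.2 (hψ0 a)
    have hrange : Module.finrank K (LinearMap.range ψ) = n + 1 := by
      rw [LinearMap.finrank_range_of_inj hinj, Module.finrank_pi, Fintype.card_fin]
    have hkerproj : Module.finrank K
        (LinearMap.ker (LinearMap.proj 0 : (Fin (n + 1) → K) →ₗ[K] K)) = n := by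
      have hsurj : LinearMap.range (LinearMap.proj 0 : (Fin (n + 1) → K) →ₗ[K] K) = ⊤ := by
        rw [LinearMap.range_eq_top]
        intro c
        exact ⟨Pi.single 0 c, by simp⟩
      have hrn := LinearMap.finrank_range_add_finrank_ker
        (LinearMap.proj 0 : (Fin (n + 1) → K) →ₗ[K] K)
      rw [hsurj, finrank_top, Module.finrank_self, Module.finrank_pi, Fintype.card_fin] at hrn
      omega
    have hmono := Submodule.finrank_mono hle
    rw [hrange, hkerproj] at hmono
    omega
  obtain ⟨a, ha0, haψ⟩ := hker
  refine ⟨a, ha0, fun j => ?_⟩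
  rw [hkey a j]
  exact congrFun haψ j

end MainProof

/-- If `K` has characteristic `2` and `n` is an odd positive integer,
then there is no `K`-smooth linear system of quadrics of projective dimension `n`
in `ℙ^n`. -/
theorem no_K_smooth_quadric_system_char_two
    {K : Type*} [Field K] [CharP K 2] (n : ℕ) (hodd : Odd n) (hpos : 0 < n)
    (F : Fin (n + 1) → MvPolynomial (Fin (n + 1)) K)
    (hhom : ∀ i, (F i).IsHomogeneous 2)
    (hli : LinearIndependent K F) :
    ∃ a : Fin (n + 1) → K, a ≠ 0 ∧
      ¬ CutsOutSmoothHypersurface (∑ i, a i • F i) := by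
  classical
  obtain ⟨a, ha0, hkerK⟩ := exists_kernel_coeffs F hhom
  refine ⟨a, ha0, ?_⟩
  intro hCut
  set Q : MvPolynomial (Fin (n + 1)) K := ∑ i, a i • F i with hQ
  have hQhom : Q.IsHomogeneous 2 := hom_sum_smul F hhom a
  set G : MvPolynomial (Fin (n + 1)) (AlgebraicClosure K) :=
    map (algebraMap K (AlgebraicClosure K)) Q with hG
  have hGhom : G.IsHomogeneous 2 := by
    intro d hd
    refine hQhom ?_
    intro h0
    apply hd
    rw [hG, coeff_map, h0, map_zero]
  have ht₀ : (Pi.single 0 1 : Fin (n + 1) → AlgebraicClosure K) ≠ 0 := by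
    intro h
    have h0 := congrFun h 0
    rw [Pi.single_eq_same, Pi.zero_apply] at h0
    exact one_ne_zero h0
  have hsingle : (fun j => algebraMap K (AlgebraicClosure K)
        ((Pi.single 0 1 : Fin (n + 1) → K) j))
      = (Pi.single 0 1 : Fin (n + 1) → AlgebraicClosure K) := by
    funext j
    rcases eq_or_ne j 0 with rfl | hj
    · rw [Pi.single_eq_same, Pi.single_eq_same, map_one]
    · rw [Pi.single_eq_of_ne hj, Pi.single_eq_of_ne hj, map_zero]
  have hgrad : ∀ j, eval (Pi.single 0 1 : Fin (n + 1) → AlgebraicClosure K)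
      (pderiv j G) = 0 := by
    intro j
    rw [hG, pderiv_map, ← hsingle, eval_map_comp, hkerK j, map_zero]
  have hMt₀ : (Bmat G).mulVec (Pi.single 0 1) = 0 := by
    funext j
    rw [Pi.zero_apply, ← eval_pderiv_eq hGhom (Pi.single 0 1) j]
    exact hgrad j
  obtain ⟨u, huker, hunm⟩ := exists_kernel_not_multiple hodd (Bmat G)
    (fun i j => Bmat_symm G i j) (fun i => Bmat_diag G i) (Pi.single 0 1) ht₀ hMt₀
  by_cases hval : eval (Pi.single 0 1 : Fin (n + 1) → AlgebraicClosure K) G = 0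
  · refine hCut (Pi.single 0 1) ht₀ ⟨?_, fun i => ?_⟩
    · rw [← hG]; exact hval
    · rw [← pderiv_map, ← hG]; exact hgrad i
  · obtain ⟨β, hβ⟩ := IsAlgClosed.exists_pow_nat_eq
      (eval (Pi.single 0 1 : Fin (n + 1) → AlgebraicClosure K) G) (n := 2) (by norm_num)
    obtain ⟨α, hα⟩ := IsAlgClosed.exists_pow_nat_eq (eval u G) (n := 2) (by norm_num)
    have hβ0 : β ≠ 0 := by
      intro h
      apply hval
      rw [← hβ, h]
      ring
    set s : Fin (n + 1) → AlgebraicClosure K :=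
      α • (Pi.single 0 1 : Fin (n + 1) → AlgebraicClosure K) + β • u with hs
    have hs0 : s ≠ 0 := by
      intro h
      apply hunm (β⁻¹ * α)
      funext j
      have hj := congrFun h j
      rw [hs] at hj
      simp only [Pi.add_apply, Pi.smul_apply, smul_eq_mul, Pi.zero_apply] at hj
      rw [add_comm] at hj
      have h3 := add_eq_zero_iff_eq_neg.mp hj
      rw [CharTwo.neg_eq] at h3
      have h4 : u j = (β⁻¹ * α) * (Pi.single 0 1 : Fin (n + 1) → AlgebraicClosure K) j := by
        rw [mul_assoc, ← h3, ← mul_assoc, inv_mul_cancel₀ hβ0, one_mul]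
      simpa using h4
    have hgrads : ∀ i, eval s (pderiv i G) = 0 := by
      intro i
      rw [eval_pderiv_eq hGhom, hs, Matrix.mulVec_add, Matrix.mulVec_smul, Matrix.mulVec_smul,
        hMt₀, huker, smul_zero, smul_zero, add_zero, Pi.zero_apply]
    have hvals : eval s G = 0 := by
      rw [hs, polarization hGhom (α • (Pi.single 0 1 : Fin (n + 1) → AlgebraicClosure K)) (β • u)]
      have h3 : ∀ j, eval (β • u) (pderiv j G) = 0 := by
        intro j
        rw [eval_pderiv_eq hGhom, Matrix.mulVec_smul, huker, smul_zero, Pi.zero_apply]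
      simp only [h3, mul_zero, Finset.sum_const_zero, add_zero]
      rw [eval_smul_sq hGhom, eval_smul_sq hGhom, hα, hβ]
      have hcomm : ∀ x y : AlgebraicClosure K, x * y + y * x = 0 := fun x y => by
        rw [mul_comm x y]; exact CharTwo.add_self_eq_zero _
      exact hcomm _ _
    refine hCut s hs0 ⟨?_, fun i => ?_⟩
    · rw [← hG]; exact hvals
    · rw [← pderiv_map, ← hG]; exact hgrads i
end

section
/- Let K be a field of characteristic 2 and let n ≥ 1 be an odd integer. Let F(x_0, …, x_n) = x_0^2 + G(x_1, …, x_n), where G ∈ K[x_1, …, x_n] is a homogeneous polynomial of degree 2. Then the quadric hypersurface cut out by F in ℙ^n is singular: there exists a point (t_0, …, t_n) ≠ (0, …, 0) with coordinates in an algebraic closure of K at which F and all its partial derivatives ∂F/∂x_i (0 ≤ i ≤ n) vanish simultaneously. -/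
open MvPolynomial

lemma coeff_pderiv' {σ R : Type*} [CommSemiring R] [DecidableEq σ] (i : σ)
    (m : σ →₀ ℕ) (p : MvPolynomial σ R) :
    coeff m (pderiv i p) = (m i + 1 : ℕ) * coeff (m + Finsupp.single i 1) p := by
  induction p using MvPolynomial.induction_on' with
  | add p q hp hq => simp [hp, hq, mul_add]
  | monomial d a =>
    rw [pderiv_monomial, coeff_monomial, coeff_monomial]
    by_cases h : d = m + Finsupp.single i 1
    · subst h
      have h1 : (m + Finsupp.single i 1 : σ →₀ ℕ) i = m i + 1 := by simp
      have h2 : m + Finsupp.single i 1 - Finsupp.single i 1 = m := by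
        ext x; simp only [Finsupp.coe_tsub, Pi.sub_apply, Finsupp.coe_add, Pi.add_apply]; omega
      rw [if_pos h2, h1, mul_comm]
      push_cast
      simp
    · rw [if_neg h, mul_zero]
      by_cases h2 : d - Finsupp.single i 1 = m
      · have hdi : d i = 0 := by
          by_contra hdi
          apply h
          ext x
          have hx2 := DFunLike.congr_fun h2 x
          simp only [Finsupp.coe_tsub, Pi.sub_apply, Finsupp.coe_add, Pi.add_apply] at hx2 ⊢
          rcases eq_or_ne x i with rfl | hx
          · simp only [Finsupp.single_eq_same] at hx2 ⊢; omega
          · simp only [Finsupp.single_eq_of_ne hx] at hx2 ⊢; omega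
        rw [if_pos h2, hdi]
        simp
      · rw [if_neg h2]

lemma isHomogeneous_pderiv' {σ R : Type*} [CommSemiring R] [DecidableEq σ]
    {p : MvPolynomial σ R} {n : ℕ} (hp : p.IsHomogeneous (n + 1)) (i : σ) :
    (pderiv i p).IsHomogeneous n := by
  intro d hd
  rw [coeff_pderiv'] at hd
  have h2 : coeff (d + Finsupp.single i 1) p ≠ 0 := fun h => hd (by simp [h])
  have h3 := hp h2
  have h4 : Finsupp.weight (1 : σ → ℕ) (d + Finsupp.single i 1) =
      Finsupp.weight 1 d + Finsupp.weight (1 : σ → ℕ) (Finsupp.single i 1) := map_add _ _ _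
  have h5 : Finsupp.weight (1 : σ → ℕ) (Finsupp.single i 1) = 1 := by
    simp [Finsupp.weight_apply, Finsupp.sum_single_index]
  show Finsupp.weight (1 : σ → ℕ) d = n
  omega

lemma degree_one_single {σ : Type*} [DecidableEq σ] {d : σ →₀ ℕ}
    (h : Finsupp.degree d = 1) : ∃ j, d = Finsupp.single j 1 := by
  have hne : d ≠ 0 := by rintro rfl; simp [map_zero] at h
  obtain ⟨j, hj⟩ := Finsupp.support_nonempty_iff.mpr hne
  refine ⟨j, ?_⟩
  have hle := Finsupp.le_degree j d
  have hj1 : 1 ≤ d j := Nat.one_le_iff_ne_zero.mpr (Finsupp.mem_support_iff.mp hj)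
  have hdj : d j = 1 := by omega
  ext x
  rcases eq_or_ne x j with rfl | hx
  · simp [hdj]
  · have hx0 : d x = 0 := by
      by_contra hx0
      have hxs : x ∈ d.support := Finsupp.mem_support_iff.mpr hx0
      have h2 : d x + d j ≤ ∑ i ∈ d.support, d i :=
        Finset.add_le_sum (fun i _ => Nat.zero_le _) hxs hj hx
      have : Finsupp.degree d = ∑ i ∈ d.support, d i := rfl
      omega
    simp [hx0, Finsupp.single_apply, Ne.symm hx]

lemma eval_homogeneous_one {R : Type*} [CommSemiring R] {n : ℕ}
    {p : MvPolynomial (Fin n) R} (hp : p.IsHomogeneous 1) (v : Fin n → R) :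
    eval v p = ∑ j, coeff (Finsupp.single j 1) p * v j := by
  classical
  have hsub : p.support ⊆ Finset.univ.image (fun j : Fin n => Finsupp.single j 1) := by
    intro d hd
    have hdeg : Finsupp.degree d = 1 := by
      have := hp (mem_support_iff.mp hd); rwa [Finsupp.degree_eq_weight_one]
    obtain ⟨j, hj⟩ := degree_one_single hdeg
    exact Finset.mem_image.mpr ⟨j, Finset.mem_univ _, hj.symm⟩
  rw [eval_eq']
  rw [Finset.sum_subset hsub (by
    intro d _ hd
    rw [mem_support_iff, not_not] at hd
    simp [hd])]
  rw [Finset.sum_image (fun a _ b _ h => Finsupp.single_left_injective one_ne_zero h)]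
  refine Finset.sum_congr rfl fun j _ => ?_
  congr 1
  have : ∀ i : Fin n, v i ^ ((Finsupp.single j 1 : Fin n →₀ ℕ) i) = if j = i then v i else 1 := by
    intro i
    rcases eq_or_ne j i with rfl | h
    · simp
    · simp [Finsupp.single_eq_of_ne h, h]
  simp only [this]
  simp

lemma det_alt_odd_s8 {n : ℕ} (hodd : Odd n) {L : Type*} [Field L] [CharP L 2]
    (M : Matrix (Fin n) (Fin n) L) (hsymm : ∀ i j, M i j = M j i) (hdiag : ∀ i, M i i = 0) :
    M.det = 0 := by
  classical
  set A : Matrix (Fin n) (Fin n) (MvPolynomial (Fin n × Fin n) ℤ) :=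
    fun i j => X (i, j) - X (j, i) with hA
  have hAT : A.transpose = -A := by
    ext i j; simp only [Matrix.transpose_apply, Matrix.neg_apply]; simp only [hA]; ring
  have hdetA : A.det = 0 := by
    have h1 : A.det = (-1 : MvPolynomial (Fin n × Fin n) ℤ) ^ n * A.det := by
      conv_lhs => rw [← Matrix.det_transpose, hAT]
      rw [Matrix.det_neg, Fintype.card_fin]
    rw [hodd.neg_one_pow, neg_one_mul] at h1
    have h2 : (2 : MvPolynomial (Fin n × Fin n) ℤ) * A.det = 0 := by
      rw [two_mul]
      linear_combination h1
    rcases mul_eq_zero.mp h2 with h | h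
    · exact absurd h two_ne_zero
    · exact h
  let φ := (MvPolynomial.eval₂Hom (Int.castRingHom L)
    (fun p : Fin n × Fin n => if p.1 < p.2 then M p.1 p.2 else 0))
  have hmap : A.map φ = M := by
    ext i j
    simp only [Matrix.map_apply]; simp only [hA, map_sub, eval₂Hom_X', φ]
    rcases lt_trichotomy i j with h | rfl | h
    · rw [if_pos h, if_neg (not_lt_of_gt h), sub_zero]
    · simp [hdiag i]
    · rw [if_neg (not_lt_of_gt h), if_pos h, zero_sub, hsymm, CharTwo.neg_eq]
  calc M.det = (A.map φ).det := by rw [hmap]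
    _ = φ A.det := (RingHom.map_det φ A).symm
    _ = 0 := by rw [hdetA, map_zero]

/-- Over a field `K` of characteristic `2` with `n` odd, any quadric
`F = x₀² + G(x₁, …, xₙ)` (with `G` a quadratic form in `x₁, …, xₙ`) is singular: there is a
nonzero point over an algebraic closure of `K` where `F` and all its partial derivatives
vanish. -/
theorem quadric_singular_char_two_odd
    {K : Type*} [Field K] [CharP K 2] (n : ℕ) (hodd : Odd n) (hpos : 0 < n)
    (G : MvPolynomial (Fin n) K) (hG : G.IsHomogeneous 2) :
    ∃ t : Fin (n + 1) → AlgebraicClosure K, t ≠ 0 ∧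
      eval t (map (algebraMap K (AlgebraicClosure K))
        (X 0 ^ 2 + rename Fin.succ G)) = 0 ∧
      ∀ i : Fin (n + 1),
        eval t (map (algebraMap K (AlgebraicClosure K))
          (pderiv i (X 0 ^ 2 + rename Fin.succ G))) = 0 := by
  classical
  set L := AlgebraicClosure K
  set f := algebraMap K L
  set G' : MvPolynomial (Fin n) L := map f G with hG'def
  have hG' : G'.IsHomogeneous 2 := hG.map f
  -- the matrix of second partial derivatives (coefficients of first derivatives)
  set M : Matrix (Fin n) (Fin n) L :=
    fun i j => coeff (Finsupp.single j 1) (pderiv i G') with hM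
  have hMentry : ∀ i j : Fin n, M i j =
      ((Finsupp.single j 1 : Fin n →₀ ℕ) i + 1 : ℕ) *
        coeff (Finsupp.single j 1 + Finsupp.single i 1) G' := by
    intro i j; rw [hM]; exact coeff_pderiv' i _ G'
  have hsymm : ∀ i j, M i j = M j i := by
    intro i j
    rw [hMentry, hMentry]
    rcases eq_or_ne i j with rfl | h
    · rfl
    · rw [Finsupp.single_eq_of_ne (Ne.symm h), Finsupp.single_eq_of_ne h, add_comm
        (Finsupp.single j 1)]
  have hdiag : ∀ i, M i i = 0 := by
    intro i
    rw [hMentry]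
    have : ((Finsupp.single i 1 : Fin n →₀ ℕ) i + 1 : ℕ) = 2 := by simp
    rw [this]
    have h2 : ((2 : ℕ) : L) = 0 := by
      exact_mod_cast CharP.cast_eq_zero L 2
    rw [h2, zero_mul]
  have hdet : M.det = 0 := det_alt_odd_s8 hodd M hsymm hdiag
  obtain ⟨v, hv0, hMv⟩ := (Matrix.exists_mulVec_eq_zero_iff).mpr hdet
  -- all partial derivatives of G' vanish at v
  have hDG : ∀ i : Fin n, eval v (pderiv i G') = 0 := by
    intro i
    have hhom : (pderiv i G').IsHomogeneous 1 := isHomogeneous_pderiv' hG' i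
    rw [eval_homogeneous_one hhom]
    have := congrFun hMv i
    simpa [Matrix.mulVec, dotProduct, hM] using this
  -- choose a square root of G'(v)
  obtain ⟨s, hs⟩ := IsAlgClosed.exists_pow_nat_eq (eval v G') (n := 2) (by norm_num)
  refine ⟨Fin.cons s v, ?_, ?_, ?_⟩
  · intro ht
    apply hv0
    funext j
    have := congrFun ht j.succ
    simpa [Fin.cons_succ] using this
  · have hcomp : (Fin.cons s v : Fin (n + 1) → L) ∘ Fin.succ = v := by
      funext j; simp [Fin.cons_succ]
    rw [map_add, map_pow, map_X, map_rename, map_add, map_pow]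
    rw [eval_X, eval_rename, Fin.cons_zero, hcomp, ← hG'def, hs]
    exact CharTwo.add_self_eq_zero _
  · intro i
    have hX2 : pderiv i (X 0 ^ 2 : MvPolynomial (Fin (n + 1)) K) = 0 := by
      rw [pderiv_pow]
      have h2 : ((2 : ℕ) : MvPolynomial (Fin (n + 1)) K) = 0 := by
        exact_mod_cast CharP.cast_eq_zero (MvPolynomial (Fin (n + 1)) K) 2
      rw [h2, zero_mul, zero_mul]
    rw [map_add, hX2, zero_add]
    induction i using Fin.cases with
    | zero =>
      have h0 : pderiv (0 : Fin (n + 1)) (rename Fin.succ G) = 0 := by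
        apply pderiv_eq_zero_of_notMem_vars
        intro hmem
        have := vars_rename Fin.succ G hmem
        obtain ⟨x, -, hx⟩ := Finset.mem_image.mp this
        exact Fin.succ_ne_zero x hx
      rw [h0, map_zero, map_zero]
    | succ j =>
      rw [pderiv_rename (Fin.succ_injective n), map_rename, eval_rename]
      have hcomp : (Fin.cons s v : Fin (n + 1) → L) ∘ Fin.succ = v := by
        funext j; simp [Fin.cons_succ]
      rw [hcomp, ← pderiv_map, ← hG'def]
      exact hDG j
end

section
/- Let K be a field of characteristic 2 and n ≥ 1 an integer. Suppose L is an (n+1)-dimensional K-linear subspace of the space of homogeneous degree-2 polynomials in K[x_0, …, x_n] such that every nonzero element of L cuts out a smooth quadric hypersurface in ℙ^n. Then L contains a polynomial of the form x_0^2 + G(x_1, …, x_n), where G is a homogeneous polynomial of degree 2 not involving x_0. -/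
open MvPolynomial

section AuxLemmas

variable {K : Type*} [Field K] {n : ℕ}

lemma aux_deg_two_classify (m : Fin (n + 1) →₀ ℕ) (hdeg : Finsupp.degree m = 2)
    (h0 : m 0 ≠ 0) :
    ∃ i : Fin (n + 1), m = Finsupp.single 0 1 + Finsupp.single i 1 := by
  have hsum : ∑ i : Fin (n + 1), m i = 2 := by
    rw [← hdeg]
    exact (Finset.sum_subset (Finset.subset_univ m.support)
      (fun i _ hi => Finsupp.notMem_support_iff.mp hi)).symm
  have hle : m 0 ≤ 2 := hdeg ▸ Finsupp.le_degree 0 m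
  have hsplit : m 0 + ∑ j : Fin n, m j.succ = 2 := by
    rw [← hsum]; exact (Fin.sum_univ_succ fun i => m i).symm
  rcases (by omega : m 0 = 2 ∨ m 0 = 1) with h2 | h1
  · have hz : ∀ j : Fin n, m j.succ = 0 := by
      have hs0 : ∑ j : Fin n, m j.succ = 0 := by omega
      intro j
      exact Finset.sum_eq_zero_iff.mp hs0 j (Finset.mem_univ j)
    refine ⟨0, ?_⟩
    ext i
    rw [Finsupp.add_apply]
    refine Fin.cases ?_ (fun j => ?_) i
    · simp [h2]
    · rw [hz j, Finsupp.single_apply,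
        if_neg (fun h => (Fin.succ_ne_zero j) h.symm)]
      omega
  · have hsum1 : ∑ j : Fin n, m j.succ = 1 := by omega
    obtain ⟨j, -, hj⟩ := Finset.exists_ne_zero_of_sum_ne_zero
      (by rw [hsum1]; exact one_ne_zero :
        (∑ j : Fin n, m j.succ) ≠ 0)
    have hjle : m j.succ ≤ ∑ k : Fin n, m k.succ :=
      Finset.single_le_sum (f := fun k : Fin n => m k.succ)
        (fun i _ => Nat.zero_le _) (Finset.mem_univ j)
    have hj1 : m j.succ = 1 := by omega
    have hz : ∀ k : Fin n, k ≠ j → m k.succ = 0 := by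
      have hadd : m j.succ + ∑ k ∈ Finset.univ.erase j, m k.succ
          = ∑ k : Fin n, m k.succ :=
        Finset.add_sum_erase Finset.univ (fun k : Fin n => m k.succ)
          (Finset.mem_univ j)
      have herase : ∑ k ∈ Finset.univ.erase j, m k.succ = 0 := by omega
      intro k hk
      exact Finset.sum_eq_zero_iff.mp herase k
        (Finset.mem_erase.mpr ⟨hk, Finset.mem_univ k⟩)
    refine ⟨j.succ, ?_⟩
    ext i
    rw [Finsupp.add_apply, Finsupp.single_apply, Finsupp.single_apply]
    refine Fin.cases ?_ (fun k => ?_) i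
    · rw [if_pos rfl, if_neg (Fin.succ_ne_zero j), h1]
      omega
    · rw [if_neg (fun h => (Fin.succ_ne_zero k) h.symm)]
      rcases eq_or_ne k j with rfl | hkj
      · rw [if_pos rfl, hj1]
      · rw [if_neg (fun h => hkj (Fin.succ_injective n h).symm), hz k hkj]
        omega

lemma aux_coeff_zero_of_x0 {F : MvPolynomial (Fin (n + 1)) K} (hF : F.IsHomogeneous 2)
    (hc : ∀ i, coeff (Finsupp.single 0 1 + Finsupp.single i 1) F = 0)
    {m : Fin (n + 1) →₀ ℕ} (hm : m 0 ≠ 0) : coeff m F = 0 := by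
  by_cases h : Finsupp.degree m = 2
  · obtain ⟨i, rfl⟩ := aux_deg_two_classify m h hm
    exact hc i
  · exact hF.coeff_eq_zero h

lemma aux_exists_rename {F : MvPolynomial (Fin (n + 1)) K}
    (h : ∀ m : Fin (n + 1) →₀ ℕ, m 0 ≠ 0 → coeff m F = 0) :
    ∃ F' : MvPolynomial (Fin n) K, rename Fin.succ F' = F := by
  apply exists_rename_eq_of_vars_subset_range F Fin.succ (Fin.succ_injective n)
  intro i hi
  rw [Finset.mem_coe, mem_vars] at hi
  obtain ⟨d, hd, hid⟩ := hi
  rcases eq_or_ne i 0 with rfl | hne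
  · exact absurd (h d (Finsupp.mem_support_iff.mp hid)) (mem_support_iff.mp hd)
  · obtain ⟨j, rfl⟩ := Fin.eq_succ_of_ne_zero hne
    exact ⟨j, rfl⟩

lemma aux_constantCoeff_pderiv {σ R : Type*} [CommSemiring R] (j : σ)
    (q : MvPolynomial σ R) :
    constantCoeff (pderiv j q) = coeff (Finsupp.single j 1) q := by
  classical
  induction q using MvPolynomial.induction_on' with
  | add p q hp hq => simp [hp, hq]
  | monomial m a =>
    rw [pderiv_monomial, coeff_monomial]
    rcases eq_or_ne m (Finsupp.single j 1) with rfl | hne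
    · simp [constantCoeff_monomial]
    · rw [if_neg hne]
      rcases eq_or_ne (m j) 0 with hj0 | hj0
      · simp [hj0]
      · have hms : m - Finsupp.single j 1 ≠ 0 := by
          intro hzero
          apply hne
          ext i
          have hi := DFunLike.congr_fun hzero i
          simp only [Finsupp.tsub_apply, Finsupp.coe_zero, Pi.zero_apply] at hi
          rw [Finsupp.single_apply] at hi ⊢
          rcases eq_or_ne j i with rfl | hij
          · rw [if_pos rfl] at hi ⊢; omega
          · rw [if_neg hij] at hi ⊢; omega
        simp [constantCoeff_monomial, hms]

lemma aux_pderiv_rename_zero {σ τ R : Type*} [CommSemiring R] {f : σ → τ} {i : τ}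
    (hi : ∀ x, f x ≠ i) (p : MvPolynomial σ R) :
    pderiv i (rename f p) = 0 := by
  induction p using MvPolynomial.induction_on with
  | C a => simp
  | add p q hp hq => simp [hp, hq]
  | mul_X p j hp => simp [hp, pderiv_X_of_ne (hi j)]

end AuxLemmas
section Singular

variable {K : Type*} [Field K] {n : ℕ}

lemma aux_singular_at_e0 {F : MvPolynomial (Fin (n + 1)) K} (hF2 : F.IsHomogeneous 2)
    (h : ∀ m : Fin (n + 1) →₀ ℕ, m 0 ≠ 0 → coeff m F = 0) :
    eval (Pi.single 0 1 : Fin (n + 1) → AlgebraicClosure K)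
        (map (algebraMap K (AlgebraicClosure K)) F) = 0 ∧
      ∀ i : Fin (n + 1),
        eval (Pi.single 0 1 : Fin (n + 1) → AlgebraicClosure K)
          (map (algebraMap K (AlgebraicClosure K)) (pderiv i F)) = 0 := by
  obtain ⟨F', rfl⟩ := aux_exists_rename h
  set φ := algebraMap K (AlgebraicClosure K)
  have hF' : F'.IsHomogeneous 2 :=
    (IsHomogeneous.rename_isHomogeneous_iff (Fin.succ_injective n)).mp hF2
  have hcomp : (Pi.single 0 1 : Fin (n + 1) → AlgebraicClosure K) ∘ Fin.succ
      = (0 : Fin n → AlgebraicClosure K) := by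
    funext j
    simp [Pi.single_apply, Fin.succ_ne_zero j]
  constructor
  · rw [map_rename, eval_rename, hcomp, eval_zero, constantCoeff_map]
    have : constantCoeff F' = 0 := by
      have : coeff 0 F' = 0 := hF'.coeff_eq_zero (by simp)
      exact this
    rw [this, map_zero]
  · intro i
    refine Fin.cases ?_ (fun j => ?_) i
    · rw [aux_pderiv_rename_zero (fun x => Fin.succ_ne_zero x) F', map_zero, map_zero]
    · rw [pderiv_rename (Fin.succ_injective n), map_rename, eval_rename, hcomp,
        eval_zero, constantCoeff_map, aux_constantCoeff_pderiv]
      have : coeff (Finsupp.single j 1) F' = 0 := by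
        apply hF'.coeff_eq_zero
        have hdd : Finsupp.degree (Finsupp.single j (1 : ℕ)) = 1 := by
          rw [Finsupp.degree_single]
        omega
      rw [this, map_zero]

end Singular

/-- Over a field `K` of characteristic `2`, an `(n+1)`-dimensional space
`L` of quadratic forms in `x₀, …, xₙ` all of whose nonzero members cut out smooth quadrics
must contain a form `x₀² + G(x₁, …, xₙ)` with `G` a quadratic form not involving `x₀`. -/
theorem smooth_quadric_system_contains_x0_squared_plus_G
    {K : Type*} [Field K] [CharP K 2] (n : ℕ) (hn : 1 ≤ n)
    (L : Submodule K (MvPolynomial (Fin (n + 1)) K))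
    (hL : L ≤ homogeneousSubmodule (Fin (n + 1)) K 2)
    (hdim : Module.finrank K L = n + 1)
    (hsm : ∀ F ∈ L, F ≠ 0 → CutsOutSmoothHypersurface F) :
    ∃ G : MvPolynomial (Fin n) K, G.IsHomogeneous 2 ∧
      (X 0 ^ 2 + rename Fin.succ G) ∈ L := by

  classical
  haveI : FiniteDimensional K L := FiniteDimensional.of_finrank_pos (by omega)
  set ψ : L →ₗ[K] (Fin (n + 1) → K) :=
    LinearMap.pi (fun i =>
      (lcoeff K (Finsupp.single 0 1 + Finsupp.single i 1)).comp L.subtype) with hψ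
  have hψ_apply : ∀ (x : L) (i : Fin (n + 1)),
      ψ x i = coeff (Finsupp.single 0 1 + Finsupp.single i 1) (x : MvPolynomial _ K) :=
    fun x i => rfl
  have hinj : Function.Injective ψ := by
    rw [injective_iff_map_eq_zero]
    intro x hx
    by_contra hne
    have hF0 : (x : MvPolynomial (Fin (n + 1)) K) ≠ 0 := by
      intro h
      exact hne (Subtype.ext h)
    have hFh : (x : MvPolynomial (Fin (n + 1)) K).IsHomogeneous 2 := hL x.2
    have hc : ∀ i, coeff (Finsupp.single 0 1 + Finsupp.single i 1)
        (x : MvPolynomial (Fin (n + 1)) K) = 0 := by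
      intro i
      rw [← hψ_apply x i, hx]
      rfl
    have hz : ∀ m : Fin (n + 1) →₀ ℕ, m 0 ≠ 0 →
        coeff m (x : MvPolynomial (Fin (n + 1)) K) = 0 :=
      fun m hm => aux_coeff_zero_of_x0 hFh hc hm
    have hsing := aux_singular_at_e0 hFh hz
    have ht : (Pi.single 0 1 : Fin (n + 1) → AlgebraicClosure K) ≠ 0 := by
      intro h
      have := congrFun h 0
      simp at this
    exact hsm x x.2 hF0 (Pi.single 0 1) ht hsing
  have hsurj : Function.Surjective ψ := by
    rw [← LinearMap.injective_iff_surjective_of_finrank_eq_finrank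
      (by rw [hdim, Module.finrank_fintype_fun_eq_card, Fintype.card_fin])]
    exact hinj
  obtain ⟨x, hxval⟩ := hsurj (Pi.single 0 1)
  set F : MvPolynomial (Fin (n + 1)) K := (x : MvPolynomial (Fin (n + 1)) K) with hFdef
  have hFh : F.IsHomogeneous 2 := hL x.2
  have hco : ∀ i, coeff (Finsupp.single 0 1 + Finsupp.single i 1) F
      = (Pi.single 0 1 : Fin (n + 1) → K) i := by
    intro i
    rw [← hψ_apply x i, hxval]
  set P : MvPolynomial (Fin (n + 1)) K := F - X 0 ^ 2 with hPdef
  have hPh : P.IsHomogeneous 2 := hFh.sub (isHomogeneous_X_pow 0 2)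
  have hX2 : (X 0 ^ 2 : MvPolynomial (Fin (n + 1)) K)
      = monomial (Finsupp.single 0 2) 1 := X_pow_eq_monomial
  have hc' : ∀ i, coeff (Finsupp.single 0 1 + Finsupp.single i 1) P = 0 := by
    intro i
    rw [hPdef, coeff_sub, hco i, hX2, coeff_monomial]
    rcases eq_or_ne i 0 with rfl | hne
    · rw [if_pos, Pi.single_eq_same]
      · ring
      · rw [← Finsupp.single_add]
    · rw [if_neg, Pi.single_eq_of_ne hne]
      · ring
      · intro h
        have := DFunLike.congr_fun h i
        rw [Finsupp.single_apply, Finsupp.add_apply, Finsupp.single_apply,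
          Finsupp.single_apply, if_neg (fun hh => hne hh.symm),
          if_neg (fun hh => hne hh.symm), if_pos rfl] at this
        omega
  have hz' : ∀ m : Fin (n + 1) →₀ ℕ, m 0 ≠ 0 → coeff m P = 0 :=
    fun m hm => aux_coeff_zero_of_x0 hPh hc' hm
  obtain ⟨G, hG⟩ := aux_exists_rename hz'
  refine ⟨G, ?_, ?_⟩
  · rw [← IsHomogeneous.rename_isHomogeneous_iff (Fin.succ_injective n), hG]
    exact hPh
  · rw [hG]
    have : X 0 ^ 2 + P = F := by rw [hPdef]; ring
    rw [this]
    exact x.2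
end
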